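/- arXiv:1905.04915 — 11 statements merged into one kernel-verified Lean document; each statement's English description precedes it below -/
import Mathlib

section
/- For an integer A > 1 and an odd integer p > 1, the set of prime factors of A^p + 1 equals the set of prime factors of A + 1 if and only if p = 3 and A = 2. -/
open Finset

private lemma aux_two_pow (m : ℕ) : m + 4 ≤ 2 ^ (m + 2) := by
  induction m with
  | zero => norm_num
  | succ n ih =>
    have : (2:ℕ) ^ (n+2) ≤ 2 ^ (n+3) := Nat.pow_le_pow_right (by norm_num) (by omega)
    calc n + 1 + 4 ≤ 2 ^ (n+2) + 1 := by omega
      _ ≤ 2 ^ (n + 3) := by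
          have h1 : (1:ℕ) ≤ 2 ^ (n+2) := Nat.one_le_two_pow
          calc 2 ^ (n+2) + 1 ≤ 2 ^ (n+2) + 2 ^ (n+2) := by omega
            _ = 2 ^ (n+3) := by ring

private lemma key_lemma (B q : ℕ) (hB : 1 < B) (hq : q.Prime) (hqodd : Odd q)
    (h : (B ^ q + 1).primeFactors = (B + 1).primeFactors) : q = 3 ∧ B = 2 := by
  have hq2 : q ≠ 2 := by rintro rfl; exact (Nat.not_odd_iff_even.mpr even_two) hqodd
  have hq3 : 3 ≤ q := by
    rcases hq.two_le.lt_or_eq with h' | h'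
    · omega
    · omega
  have hdvd1 : B + 1 ∣ B ^ q + 1 := by
    simpa using Odd.nat_add_dvd_pow_add_pow B 1 hqodd
  set S : ℕ := (B ^ q + 1) / (B + 1) with hSdef
  have hS : S * (B + 1) = B ^ q + 1 := Nat.div_mul_cancel hdvd1
  have hBlt : B < B ^ q := by
    calc B = B ^ 1 := (pow_one B).symm
    _ < B ^ q := Nat.pow_lt_pow_right hB (by omega)
  have hS2 : 2 ≤ S := by
    rcases Nat.lt_or_ge S 2 with h' | h'
    · interval_cases S <;> omega
    · exact h'
  have hSdvd : S ∣ B ^ q + 1 := ⟨B + 1, hS.symm⟩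
  -- the integer identity S = ∑ (-B)^i
  have hSZ : (S : ℤ) = ∑ i ∈ range q, (-(B:ℤ)) ^ i := by
    have hgeom : (∑ i ∈ range q, (-(B:ℤ)) ^ i) * ((-(B:ℤ)) - 1) = (-(B:ℤ)) ^ q - 1 :=
      geom_sum_mul _ q
    have hneg : (-(B:ℤ)) ^ q = -((B:ℤ) ^ q) := Odd.neg_pow hqodd _
    have hmul : (∑ i ∈ range q, (-(B:ℤ)) ^ i) * ((B:ℤ) + 1) = (B:ℤ) ^ q + 1 := by
      have := hgeom
      rw [hneg] at this
      linear_combination -this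
    have hmul2 : (S : ℤ) * ((B:ℤ) + 1) = (B:ℤ) ^ q + 1 := by
      exact_mod_cast congrArg (Nat.cast : ℕ → ℤ) hS
    have hBne : ((B:ℤ) + 1) ≠ 0 := by positivity
    exact mul_right_cancel₀ hBne (hmul2.trans hmul.symm)
  -- every prime factor of S is q
  have hprim : ∀ {r : ℕ}, r.Prime → r ∣ S → r = q := by
    intro r hr hrS
    have hrpow : r ∣ B ^ q + 1 := hrS.trans hSdvd
    have hrB1 : r ∣ B + 1 := by
      have : r ∈ (B ^ q + 1).primeFactors := Nat.mem_primeFactors.mpr ⟨hr, hrpow, by positivity⟩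
      rw [h] at this
      exact (Nat.mem_primeFactors.mp this).2.1
    have hrq : r ∣ q := by
      have hcast : ((S : ℤ) : ZMod r) = ((∑ i ∈ range q, (-(B:ℤ)) ^ i : ℤ) : ZMod r) :=
        congrArg _ hSZ
      push_cast at hcast
      have hBm : (B : ZMod r) = -1 := by
        have h0 : ((B + 1 : ℕ) : ZMod r) = 0 := (ZMod.natCast_eq_zero_iff _ _).mpr hrB1
        push_cast at h0
        linear_combination h0
      have hS0 : ((S : ℕ) : ZMod r) = 0 := (ZMod.natCast_eq_zero_iff _ _).mpr hrS
      rw [hS0, hBm] at hcast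
      simp at hcast
      have : ((q : ℕ) : ZMod r) = 0 := by rw [← hcast]
      exact (ZMod.natCast_eq_zero_iff _ _).mp this
    exact (Nat.prime_dvd_prime_iff_eq hr hq).mp hrq
  -- S is a power of q
  have hSpow : S = q ^ S.primeFactorsList.length :=
    Nat.eq_prime_pow_of_unique_prime_dvd (by omega) hprim
  have hqS : q ∣ S := by
    have hmf : S.minFac ∣ S := Nat.minFac_dvd S
    have := hprim (Nat.minFac_prime (by omega)) hmf
    rwa [this] at hmf
  have hqB1 : q ∣ B + 1 := by
    have : q ∈ (B ^ q + 1).primeFactors :=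
      Nat.mem_primeFactors.mpr ⟨hq, hqS.trans hSdvd, by positivity⟩
    rw [h] at this
    exact (Nat.mem_primeFactors.mp this).2.1
  have hqB : ¬ q ∣ B := by
    intro hcon
    have h1 : q ∣ 1 := by simpa using Nat.dvd_sub hqB1 hcon
    exact hq.one_lt.ne' (Nat.dvd_one.mp h1)
  -- LTE
  haveI : Fact q.Prime := ⟨hq⟩
  have hlte : padicValNat q (B ^ q + 1 ^ q) = padicValNat q (B + 1) + padicValNat q q :=
    padicValNat.pow_add_pow hqodd (by simpa using hqB1) hqB hqodd
  rw [one_pow, padicValNat.self hq.one_lt] at hlte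
  have hmulval : padicValNat q (S * (B + 1)) = padicValNat q S + padicValNat q (B + 1) :=
    padicValNat.mul (by omega) (by omega)
  rw [hS, hlte] at hmulval
  have hvS : padicValNat q S = 1 := by omega
  have hlen : S.primeFactorsList.length = 1 := by
    have : padicValNat q (q ^ S.primeFactorsList.length) = S.primeFactorsList.length :=
      padicValNat.prime_pow _
    rw [← hSpow, hvS] at this
    omega
  have hSq : S = q := by rw [hSpow, hlen, pow_one]
  rw [hSq] at hS
  -- now q * (B+1) = B^q + 1, q odd prime ≥ 3, B ≥ 2
  have hq5 : q = 3 ∨ 5 ≤ q := by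
    rcases hqodd with ⟨k, rfl⟩
    omega
  have hq_eq : q = 3 := by
    rcases hq5 with h' | h'
    · exact h'
    · exfalso
      have h1 : q ≤ 2 ^ (q - 2) := by
        have := aux_two_pow (q - 4)
        have : q - 4 + 4 ≤ 2 ^ (q - 4 + 2) := this
        have heq : q - 4 + 2 = q - 2 := by omega
        rw [heq] at this
        omega
      have h2 : 2 ^ (q - 2) ≤ B ^ (q - 2) := Nat.pow_le_pow_left (by omega) _
      have h3 : B ^ q = B ^ (q - 2) * B ^ 2 := by
        rw [← pow_add]; congr 1; omega
      have h4 : q * (B + 2) ≤ B ^ q := by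
        calc q * (B + 2) ≤ 2 ^ (q - 2) * B ^ 2 := by nlinarith
          _ ≤ B ^ (q-2) * B ^ 2 := by nlinarith
          _ = B ^ q := h3.symm
      nlinarith
  subst hq_eq
  refine ⟨rfl, ?_⟩
  rcases Nat.lt_or_ge B 3 with h' | h'
  · omega
  · exfalso; nlinarith [hS, pow_succ B 2, sq_nonneg B]

theorem stmt0 (A p : ℕ) (hA : 1 < A) (hp : 1 < p) (hodd : Odd p) :
    (A ^ p + 1).primeFactors = (A + 1).primeFactors ↔ p = 3 ∧ A = 2 := by
  constructor
  · intro h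
    set q := p.minFac with hqdef
    have hq : q.Prime := Nat.minFac_prime (by omega)
    have hqdvd : q ∣ p := Nat.minFac_dvd p
    have hqodd : Odd q := hq.odd_of_ne_two (by
      intro h2
      rw [h2] at hqdvd
      exact (Nat.not_odd_iff_even.mpr (even_iff_two_dvd.mpr hqdvd)) hodd)
    obtain ⟨m, hm⟩ := hqdvd
    have hm0 : m ≠ 0 := by rintro rfl; omega
    have hmodd : Odd m := by
      rcases Nat.even_or_odd m with he | ho
      · exfalso
        have : Even p := by rw [hm]; exact he.mul_left q
        exact (Nat.not_odd_iff_even.mpr this) hodd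
      · exact ho
    set B := A ^ m with hBdef
    have hB : 1 < B := Nat.one_lt_pow hm0 hA
    have hBq : B ^ q = A ^ p := by rw [hBdef, ← pow_mul, hm, mul_comm]
    -- chain of prime factor sets
    have hd1 : A + 1 ∣ B + 1 := by
      simpa using Odd.nat_add_dvd_pow_add_pow A 1 hmodd
    have hd2 : B + 1 ∣ B ^ q + 1 := by
      simpa using Odd.nat_add_dvd_pow_add_pow B 1 hqodd
    have hsub1 : (A + 1).primeFactors ⊆ (B + 1).primeFactors :=
      Nat.primeFactors_mono hd1 (by omega)
    have hsub2 : (B + 1).primeFactors ⊆ (B ^ q + 1).primeFactors :=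
      Nat.primeFactors_mono hd2 (by positivity)
    have hBh : (B ^ q + 1).primeFactors = (A + 1).primeFactors := by rw [hBq]; exact h
    have hkey : (B ^ q + 1).primeFactors = (B + 1).primeFactors := by
      apply Finset.Subset.antisymm
      · rw [hBh]; exact hsub1
      · exact hsub2
    obtain ⟨hq3, hB2⟩ := key_lemma B q hB hq hqodd hkey
    -- A^m = 2, A > 1 → A = 2, m = 1
    have hAle : A ≤ B := by
      calc A = A ^ 1 := (pow_one A).symm
      _ ≤ A ^ m := Nat.pow_le_pow_right (by omega) (by omega)
    have hA2 : A = 2 := by omega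
    have hm1 : m = 1 := by
      by_contra hm1
      have h2 : 2 ≤ m := by omega
      have h4 : (4:ℕ) ≤ B := by
        calc (4:ℕ) = 2 ^ 2 := rfl
        _ ≤ A ^ 2 := Nat.pow_le_pow_left (by omega) 2
        _ ≤ A ^ m := Nat.pow_le_pow_right (by omega) h2
      omega
    refine ⟨?_, hA2⟩
    rw [hq3, hm1, mul_one] at hm
    exact hm
  · rintro ⟨rfl, rfl⟩
    have h9 : (2:ℕ) ^ 3 + 1 = 3 ^ 2 := by norm_num
    rw [h9, Nat.primeFactors_prime_pow (by norm_num) Nat.prime_three]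
    have : (2 + 1 : ℕ) = 3 := rfl
    rw [this, Nat.Prime.primeFactors Nat.prime_three]
end

section
/- For an integer A > 1 and an even positive integer q, the set of prime factors of A^q - 1 equals the set of prime factors of A + 1 if and only if q = 2 and A = 2^l + 1 for some integer l ≥ 0. -/
private lemma pow2_of_primes : ∀ n : ℕ, n ≠ 0 →
    (∀ p : ℕ, p.Prime → p ∣ n → p = 2) → ∃ l, n = 2 ^ l := by
  intro n
  induction n using Nat.strong_induction_on with
  | _ n ih =>
    intro hn h
    rcases eq_or_ne n 1 with h1 | h1
    · exact ⟨0, by simp [h1]⟩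
    · have hp := Nat.minFac_prime h1
      have hd := Nat.minFac_dvd n
      have h2 : n.minFac = 2 := h _ hp hd
      rw [h2] at hd
      obtain ⟨m, rfl⟩ := hd
      have hm : m ≠ 0 := by rintro rfl; simp at hn
      obtain ⟨l, rfl⟩ := ih m (by omega) hm (fun p pp pd => h p pp (pd.mul_left 2))
      exact ⟨l + 1, by ring⟩

private lemma neg_one_of_dvd {p A : ℕ} (hpA : p ∣ A + 1) : ((A : ZMod p) = -1) := by
  have h0 : ((A + 1 : ℕ) : ZMod p) = 0 := (ZMod.natCast_eq_zero_iff _ _).mpr hpA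
  push_cast at h0
  exact eq_neg_of_add_eq_zero_left h0

theorem stmt1 (A q : ℕ) (hA : 1 < A) (hq : 0 < q) (heven : Even q) :
    (A ^ q - 1).primeFactors = (A + 1).primeFactors ↔
      q = 2 ∧ ∃ l : ℕ, A = 2 ^ l + 1 := by
  obtain ⟨m, hm⟩ := heven
  have hApow : 1 < A ^ q := Nat.one_lt_pow hq.ne' hA
  have hcast : ((A ^ q - 1 : ℕ) : ℤ) = (A : ℤ) ^ q - 1 := by
    rw [Nat.cast_sub (by omega : 1 ≤ A ^ q)]; push_cast; ring
  constructor
  · intro h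
    -- Step 1: every prime factor of A - 1 equals 2
    have hstep1 : ∀ p : ℕ, p.Prime → p ∣ A - 1 → p = 2 := by
      intro p pp pd
      have h1 : p ∣ A ^ q - 1 :=
        pd.trans (by simpa using Nat.sub_dvd_pow_sub_pow A 1 q)
      have h2 : p ∈ (A ^ q - 1).primeFactors :=
        Nat.mem_primeFactors.mpr ⟨pp, h1, by omega⟩
      rw [h] at h2
      have h3 : p ∣ A + 1 := Nat.dvd_of_mem_primeFactors h2
      have h4 : p ∣ 2 := by
        have h5 := Nat.dvd_sub h3 pd
        simpa [show A + 1 - (A - 1) = 2 by omega] using h5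
      exact (Nat.prime_dvd_prime_iff_eq pp Nat.prime_two).mp h4
    obtain ⟨l, hl⟩ := pow2_of_primes (A - 1) (by omega) hstep1
    -- Step 2: q = 2
    have hq2 : q = 2 := by
      by_contra hne
      have hm2 : 2 ≤ m := by omega
      obtain ⟨p, pp, hpd, hpn⟩ : ∃ p : ℕ, p.Prime ∧ p ∣ A ^ q - 1 ∧ ¬ p ∣ A + 1 := by
        rcases Nat.even_or_odd m with hme | hmo
        · -- m even, so 4 ∣ q; use an odd prime factor of A^2 + 1
          obtain ⟨k, hk⟩ := hme
          have hq4 : q = 4 * k := by omega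
          obtain ⟨p, pp, hp2, hpM⟩ : ∃ p : ℕ, p.Prime ∧ p ≠ 2 ∧ p ∣ A ^ 2 + 1 := by
            rcases Nat.even_or_odd A with hAe | hAo
            · -- A even : A^2+1 odd
              have hmodd : ¬ (2 ∣ A ^ 2 + 1) := by
                obtain ⟨a, rfl⟩ := hAe
                have : (a + a) ^ 2 + 1 = 2 * (2 * a ^ 2) + 1 := by ring
                omega
              have hM0 : 0 < A ^ 2 := by positivity
              have hM1 : A ^ 2 + 1 ≠ 1 := by omega
              refine ⟨(A ^ 2 + 1).minFac, Nat.minFac_prime hM1, ?_, Nat.minFac_dvd _⟩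
              intro h2
              have hd := Nat.minFac_dvd (A ^ 2 + 1)
              rw [h2] at hd
              exact hmodd hd
            · -- A odd : A^2 + 1 = 2 * t with t odd, t > 1
              obtain ⟨a, ha⟩ := hAo
              have hM : A ^ 2 + 1 = 4 * (a * a + a) + 2 := by subst ha; ring
              have ha1 : 1 ≤ a := by omega
              set t := 2 * (a * a + a) + 1 with ht
              have htM : A ^ 2 + 1 = 2 * t := by omega
              have ht1 : t ≠ 1 := by nlinarith
              refine ⟨t.minFac, Nat.minFac_prime ht1, ?_, (Nat.minFac_dvd t).trans ⟨2, by omega⟩⟩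
              intro h2
              have := h2 ▸ Nat.minFac_dvd t
              omega
          refine ⟨p, pp, ?_, ?_⟩
          · -- p ∣ A^q - 1
            rw [← Int.natCast_dvd_natCast, hcast]
            have d1 : (p : ℤ) ∣ (A : ℤ) ^ 2 + 1 := by
              have := Int.natCast_dvd_natCast.mpr hpM
              push_cast at this; exact this
            have d2 : (A : ℤ) ^ 2 + 1 ∣ (A : ℤ) ^ 4 - 1 := ⟨(A : ℤ) ^ 2 - 1, by ring⟩
            have d3 : (A : ℤ) ^ 4 - 1 ∣ (A : ℤ) ^ q - 1 := by
              have := sub_dvd_pow_sub_pow ((A : ℤ) ^ 4) 1 k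
              simpa [hq4, ← pow_mul] using this
            exact d1.trans (d2.trans d3)
          · -- ¬ p ∣ A + 1
            intro hpA
            haveI : Fact p.Prime := ⟨pp⟩
            have hA1 : ((A : ZMod p) = -1) := neg_one_of_dvd hpA
            have h0 : ((A ^ 2 + 1 : ℕ) : ZMod p) = 0 :=
              (ZMod.natCast_eq_zero_iff _ _).mpr hpM
            push_cast at h0
            rw [hA1] at h0
            have h2 : ((2 : ℕ) : ZMod p) = 0 := by push_cast; linear_combination h0
            have := (ZMod.natCast_eq_zero_iff 2 p).mp h2
            exact hp2 ((Nat.prime_dvd_prime_iff_eq pp Nat.prime_two).mp this)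
        · -- m odd : use a prime factor of 1 + A + ... + A^(m-1)
          set N := ∑ i ∈ Finset.range m, A ^ i with hN
          have hNge : 1 + A ≤ N := by
            have hsub : ({0, 1} : Finset ℕ) ⊆ Finset.range m := by
              intro x hx
              simp only [Finset.mem_insert, Finset.mem_singleton] at hx
              simp only [Finset.mem_range]
              omega
            have := Finset.sum_le_sum_of_subset (f := fun i => A ^ i) hsub
            simpa using this
          have hN1 : N ≠ 1 := by omega
          refine ⟨N.minFac, Nat.minFac_prime hN1, ?_, ?_⟩
          · -- p ∣ A^q - 1
            rw [← Int.natCast_dvd_natCast, hcast]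
            have d1 : ((N : ℤ)) ∣ (A : ℤ) ^ q - 1 := by
              refine ⟨((A : ℤ) - 1) * ((A : ℤ) ^ m + 1), ?_⟩
              have hg := geom_sum_mul (A : ℤ) m
              calc (A : ℤ) ^ q - 1 = ((A : ℤ) ^ m - 1) * ((A : ℤ) ^ m + 1) := by
                    rw [hm]; ring
                _ = ((∑ i ∈ Finset.range m, (A : ℤ) ^ i) * ((A : ℤ) - 1)) * ((A : ℤ) ^ m + 1) := by
                    rw [hg]
                _ = (N : ℤ) * (((A : ℤ) - 1) * ((A : ℤ) ^ m + 1)) := by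
                    push_cast [hN]; ring
            exact (Int.natCast_dvd_natCast.mpr (Nat.minFac_dvd N)).trans d1
          · -- ¬ p ∣ A + 1
            intro hpA
            set p := N.minFac with hp
            haveI : Fact p.Prime := ⟨Nat.minFac_prime hN1⟩
            have hA1 : ((A : ZMod p) = -1) := neg_one_of_dvd hpA
            have h0 : ((N : ℕ) : ZMod p) = 0 :=
              (ZMod.natCast_eq_zero_iff _ _).mpr (Nat.minFac_dvd N)
            rw [hN] at h0
            push_cast at h0
            rw [hA1] at h0
            rw [neg_one_geom_sum] at h0
            rw [if_neg (Nat.not_even_iff_odd.mpr hmo)] at h0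
            exact one_ne_zero h0
      have hmem : p ∈ (A ^ q - 1).primeFactors :=
        Nat.mem_primeFactors.mpr ⟨pp, hpd, by omega⟩
      rw [h] at hmem
      exact hpn (Nat.dvd_of_mem_primeFactors hmem)
    exact ⟨hq2, l, by omega⟩
  · rintro ⟨rfl, l, rfl⟩
    have key : (2 ^ l + 1) ^ 2 - 1 = 2 ^ l * (2 ^ l + 2) := by
      have h1 : (2 ^ l + 1) ^ 2 = 2 ^ l * (2 ^ l + 2) + 1 := by ring
      omega
    rw [key]
    cases l with
    | zero => norm_num
    | succ n =>
      rw [Nat.primeFactors_mul (pow_ne_zero _ two_ne_zero) (by positivity),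
        Nat.primeFactors_prime_pow (Nat.succ_ne_zero n) Nat.prime_two]
      refine Finset.union_eq_right.mpr ?_
      rw [Finset.singleton_subset_iff]
      exact Nat.mem_primeFactors.mpr ⟨Nat.prime_two, ⟨2 ^ n + 1, by ring⟩, by positivity⟩
end

section
/- Let A > 1 be an integer, p an odd prime, and suppose every prime factor of A^p + 1 divides A + 1. Then B = (A^p + 1)/(A + 1) is congruent to p modulo p^2 and every prime factor of B equals p; consequently B = p. -/
theorem stmt2 (A p : ℕ) (hA : 1 < A) (hp : p.Prime) (hodd : Odd p)
    (hsub : (A ^ p + 1).primeFactors ⊆ (A + 1).primeFactors) :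
    (A ^ p + 1) / (A + 1) ≡ p [MOD p ^ 2] ∧
    ((A ^ p + 1) / (A + 1)).primeFactors ⊆ {p} ∧
    (A ^ p + 1) / (A + 1) = p := by
  haveI : Fact p.Prime := ⟨hp⟩
  have hp3 : 3 ≤ p := by
    have h2 := hp.two_le
    rcases hodd with ⟨k, hk⟩; omega
  set B := (A ^ p + 1) / (A + 1) with hBdef
  have hd : A + 1 ∣ A ^ p + 1 := by
    simpa using Odd.nat_add_dvd_pow_add_pow A 1 hodd
  have hB : (A + 1) * B = A ^ p + 1 := Nat.mul_div_cancel' hd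
  have hne : A ^ p + 1 ≠ 0 := by positivity
  have hApA : A ^ 3 ≤ A ^ p := Nat.pow_le_pow_right (by omega) hp3
  have hA3 : A ^ 3 = A * A * A := by ring
  have hB1 : 1 < B := by
    rcases Nat.lt_or_ge B 2 with h | h
    · interval_cases B <;> nlinarith
    · omega
  -- B as an integer geometric sum
  have hS : ((B : ℤ)) = ∑ i ∈ Finset.range p, (A : ℤ) ^ i * (-1) ^ (p - 1 - i) := by
    have h₁ := geom_sum₂_mul (A : ℤ) (-1) p
    rw [Odd.neg_pow hodd, sub_neg_eq_add, sub_neg_eq_add, one_pow] at h₁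
    have h₂ : ((B : ℤ)) * ((A : ℤ) + 1) = (A : ℤ) ^ p + 1 := by
      have := congrArg (Nat.cast : ℕ → ℤ) hB
      push_cast at this; linarith
    have hne2 : ((A : ℤ) + 1) ≠ 0 := by positivity
    exact mul_right_cancel₀ hne2 (by rw [h₂, ← h₁])
  -- every prime factor of B is p
  have hq : ∀ q : ℕ, q.Prime → q ∣ B → q = p := by
    intro q hq hqB
    haveI : Fact q.Prime := ⟨hq⟩
    have hqAp : q ∣ A ^ p + 1 := hqB.trans ⟨A + 1, by rw [← hB]; ring⟩
    have hqA1 : q ∣ A + 1 := Nat.dvd_of_mem_primeFactors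
      (hsub (Nat.mem_primeFactors.mpr ⟨hq, hqAp, hne⟩))
    have hA1q : ((A : ZMod q)) + 1 = 0 := by
      have := (ZMod.natCast_eq_zero_iff (A + 1) q).mpr hqA1
      push_cast at this; exact this
    have hAq : ((A : ZMod q)) = -1 := eq_neg_of_add_eq_zero_left hA1q
    have hBq : ((B : ZMod q)) = 0 := (ZMod.natCast_eq_zero_iff B q).mpr hqB
    have hpq : ((p : ZMod q)) = 0 := by
      have h3 := congrArg (Int.cast : ℤ → ZMod q) hS
      push_cast at h3
      rw [hAq] at h3
      rw [hBq] at h3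
      have h4 : ∀ i ∈ Finset.range p, (-1 : ZMod q) ^ i * (-1) ^ (p - 1 - i) = 1 := by
        intro i hi
        rw [Finset.mem_range] at hi
        rw [← pow_add]
        have : i + (p - 1 - i) = p - 1 := by omega
        rw [this]
        have hev : Even (p - 1) := by rcases hodd with ⟨k, hk⟩; exact ⟨k, by omega⟩
        exact hev.neg_one_pow
      rw [Finset.sum_congr rfl h4] at h3
      simp at h3
      exact h3.symm
    have := (ZMod.natCast_eq_zero_iff p q).mp hpq
    exact ((Nat.prime_dvd_prime_iff_eq hq hp).mp this)
  -- p divides B, hence p divides A + 1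
  obtain ⟨q, hqp, hqB⟩ := Nat.exists_prime_and_dvd (by omega : B ≠ 1)
  have hpB : p ∣ B := hq q hqp hqB ▸ hqB
  have hpAp : p ∣ A ^ p + 1 := hpB.trans ⟨A + 1, by rw [← hB]; ring⟩
  have hpA1 : p ∣ A + 1 := Nat.dvd_of_mem_primeFactors
    (hsub (Nat.mem_primeFactors.mpr ⟨hp, hpAp, hne⟩))
  have hpA : ¬ p ∣ A := by
    intro h
    have h1 : p = 1 := Nat.dvd_one.mp ((Nat.dvd_add_right h).mp hpA1)
    omega
  -- lifting the exponent
  have hLTE : padicValNat p (A ^ p + 1 ^ p) = padicValNat p (A + 1) + padicValNat p p :=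
    padicValNat.pow_add_pow hodd (by simpa using hpA1) hpA hodd
  have hvp : padicValNat p p = 1 := padicValNat.self hp.one_lt
  have hvB : padicValNat p B = 1 := by
    have hmul : padicValNat p ((A + 1) * B) = padicValNat p (A + 1) + padicValNat p B :=
      padicValNat.mul (by omega) (by omega)
    rw [hB] at hmul
    simp only [one_pow] at hLTE
    omega
  -- B is a power of p
  obtain hBpow := Nat.eq_prime_pow_of_unique_prime_dvd (p := p) (by omega : B ≠ 0)
    (fun {d} hd hdB => hq d hd hdB)
  set k := B.primeFactorsList.length with hk
  have hvBk : padicValNat p (p ^ k) = k := padicValNat.prime_pow k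
  rw [← hBpow, hvB] at hvBk
  have hBp : B = p := by rw [hBpow, ← hvBk, pow_one]
  refine ⟨by rw [hBp], ?_, hBp⟩
  rw [hBp, hp.primeFactors]
end

section
/- Let A > 1 and m > n ≥ 1 be integers. Then P(A^m + 1) = P(A^n + 1) if and only if m = 3, n = 1, and A = 2. -/
/-!
Put `g = gcd m n`. If `w > 2` divides both `A ^ m + 1` and `A ^ n + 1`, then
`A ^ m ≡ A ^ n ≡ -1` modulo `w`, which forces `A ^ g ≡ -1` and makes `m / g`, `n / g` odd. Such a
`w` exists: an odd common prime factor, or `A ^ n + 1` itself when both numbers are powers of two.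
Consequently every prime factor of `c ^ M + 1` (`c = A ^ g`, `M = m / g`) divides `c + 1`, and
lifting the exponent gives `c ^ M + 1 ∣ (c + 1) * M`. As `M ≥ 3` is odd, this only happens for
`c = 2`, `M = 3`.
-/

section NegOnePow

variable {M : Type*} [Monoid M] {x y : M} {k m n : ℕ}

theorem pow_gcd_pow_div_gcd_left : (x ^ m.gcd n) ^ (m / m.gcd n) = x ^ m := by
  rw [← pow_mul, Nat.mul_div_cancel' (m.gcd_dvd_left n)]

variable [HasDistribNeg M]

theorem odd_of_pow_eq_neg_one_of_sq_eq_one (h : (-1 : M) ≠ 1) (hy : y ^ 2 = 1)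
    (hk : y ^ k = -1) : Odd k := by
  refine Nat.not_even_iff_odd.mp fun ⟨j, hj⟩ => h ?_
  rw [← hk, hj, ← two_mul, pow_mul, hy, one_pow]

theorem eq_neg_one_of_pow_eq_neg_one_of_sq_eq_one (h : (-1 : M) ≠ 1) (hy : y ^ 2 = 1)
    (hk : y ^ k = -1) : y = -1 := by
  obtain ⟨j, rfl⟩ := odd_of_pow_eq_neg_one_of_sq_eq_one h hy hk
  rwa [pow_succ, pow_mul, hy, one_pow, one_mul] at hk

theorem sq_pow_gcd_eq_one (hm : x ^ m = -1) (hn : x ^ n = -1) : (x ^ m.gcd n) ^ 2 = 1 := by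
  rw [← pow_mul, mul_comm, ← Nat.gcd_mul_left, pow_gcd_eq_one, pow_mul', pow_mul', hm, hn]
  simp

theorem odd_div_gcd_of_pow_eq_neg_one (h : (-1 : M) ≠ 1) (hm : x ^ m = -1) (hn : x ^ n = -1) :
    Odd (m / m.gcd n) :=
  odd_of_pow_eq_neg_one_of_sq_eq_one h (sq_pow_gcd_eq_one hm hn)
    (pow_gcd_pow_div_gcd_left.trans hm)

theorem pow_gcd_eq_neg_one (h : (-1 : M) ≠ 1) (hm : x ^ m = -1) (hn : x ^ n = -1) :
    x ^ m.gcd n = -1 :=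
  eq_neg_one_of_pow_eq_neg_one_of_sq_eq_one h (sq_pow_gcd_eq_one hm hn)
    (pow_gcd_pow_div_gcd_left.trans hm)

end NegOnePow

section PowAddOne

variable {A w m n : ℕ}

theorem ZMod.natCast_pow_eq_neg_one_iff : (A : ZMod w) ^ n = -1 ↔ w ∣ A ^ n + 1 := by
  rw [← ZMod.natCast_eq_zero_iff, eq_neg_iff_add_eq_zero]
  push_cast
  rfl

theorem dvd_pow_gcd_add_one (hw : 2 < w) (hm : w ∣ A ^ m + 1) (hn : w ∣ A ^ n + 1) :
    w ∣ A ^ m.gcd n + 1 := by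
  have : Fact (2 < w) := ⟨hw⟩
  rw [← ZMod.natCast_pow_eq_neg_one_iff] at *
  exact pow_gcd_eq_neg_one ZMod.neg_one_ne_one hm hn

theorem odd_div_gcd_of_dvd_pow_add_one (hw : 2 < w) (hm : w ∣ A ^ m + 1)
    (hn : w ∣ A ^ n + 1) : Odd (m / m.gcd n) := by
  have : Fact (2 < w) := ⟨hw⟩
  rw [← ZMod.natCast_pow_eq_neg_one_iff] at hm hn
  exact odd_div_gcd_of_pow_eq_neg_one ZMod.neg_one_ne_one hm hn

theorem two_dvd_pow_gcd_add_one (hm0 : m ≠ 0) (hm : 2 ∣ A ^ m + 1) :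
    2 ∣ A ^ m.gcd n + 1 := by
  rw [← even_iff_two_dvd, Nat.even_add_one, Nat.even_pow] at *
  exact fun h => hm ⟨h.1, hm0⟩

theorem primeFactors_subset_primeFactors_pow_gcd_add_one (hm0 : m ≠ 0)
    (h : (A ^ m + 1).primeFactors = (A ^ n + 1).primeFactors) :
    (A ^ m + 1).primeFactors ⊆ (A ^ m.gcd n + 1).primeFactors := by
  intro q hq
  have hqn : q ∈ (A ^ n + 1).primeFactors := h ▸ hq
  rw [Nat.mem_primeFactors] at *
  refine ⟨hq.1, ?_, by positivity⟩
  rcases hq.1.two_le.eq_or_lt with rfl | hq2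
  · exact two_dvd_pow_gcd_add_one hm0 hq.2.1
  · exact dvd_pow_gcd_add_one hq2 hq.2.1 hqn.2.1

theorem exists_two_lt_dvd_pow_add_one (hA : 1 < A) (hn : 1 ≤ n) (hmn : n < m)
    (h : (A ^ m + 1).primeFactors = (A ^ n + 1).primeFactors) :
    ∃ w, 2 < w ∧ w ∣ A ^ m + 1 ∧ w ∣ A ^ n + 1 := by
  by_cases hodd : ∃ p ∈ (A ^ n + 1).primeFactors, p ≠ 2
  · obtain ⟨p, hp, hp2⟩ := hodd
    have hpm : p ∈ (A ^ m + 1).primeFactors := h ▸ hp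
    exact ⟨p, (Nat.prime_of_mem_primeFactors hp).two_le.lt_of_ne' hp2,
      Nat.dvd_of_mem_primeFactors hpm, Nat.dvd_of_mem_primeFactors hp⟩
  push Not at hodd
  -- Both numbers are powers of two, so the smaller one divides the larger one.
  have two_pow : ∀ k, (A ^ k + 1).primeFactors = (A ^ n + 1).primeFactors →
      ∃ e, A ^ k + 1 = 2 ^ e := fun k hk =>
    ⟨_, Nat.eq_prime_pow_of_unique_prime_dvd (by positivity) fun hd hdk =>
      hodd _ (hk ▸ Nat.mem_primeFactors.mpr ⟨hd, hdk, by positivity⟩)⟩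
  obtain ⟨a, ha⟩ := two_pow n rfl
  obtain ⟨b, hb⟩ := two_pow m h
  have hlt : A ^ n + 1 < A ^ m + 1 := by gcongr
  refine ⟨A ^ n + 1, ?_, ?_, dvd_rfl⟩
  · have : A ≤ A ^ n := Nat.le_self_pow (by omega) A
    omega
  · rw [ha, hb] at hlt ⊢
    exact pow_dvd_pow 2 ((Nat.pow_lt_pow_iff_right (by norm_num)).mp hlt).le

end PowAddOne

section LiftingTheExponent

variable {c s : ℕ}

theorem exists_odd_pow_add_one_eq_mul (hc : Odd c) (hs : Odd s) :
    ∃ t, Odd t ∧ c ^ s + 1 = (c + 1) * t := by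
  obtain ⟨r, rfl⟩ := hc
  obtain ⟨j, rfl⟩ := hs
  induction j with
  | zero => exact ⟨1, odd_one, by ring⟩
  | succ j ih =>
    obtain ⟨_, ⟨u, rfl⟩, e⟩ := ih
    -- `c ^ (s + 2) + 1 = c ^ 2 * (c ^ s + 1) - (c - 1) * (c + 1)`
    refine ⟨2 * ((2 * r + 1) ^ 2 * u + 2 * r ^ 2 + r) + 1, odd_two_mul_add_one _, ?_⟩
    linear_combination (2 * r + 1) ^ 2 * e

theorem factorization_two_pow_add_one (hc : Odd c) (hs : Odd s) :
    (c ^ s + 1).factorization 2 = (c + 1).factorization 2 := by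
  obtain ⟨t, ht, e⟩ := exists_odd_pow_add_one_eq_mul hc hs
  rw [e, Nat.factorization_mul (by omega) ht.pos.ne', Finsupp.add_apply,
    Nat.factorization_eq_zero_of_not_dvd (n := t) (Nat.two_dvd_ne_zero.mpr (Nat.odd_iff.mp ht)),
    add_zero]

theorem pow_add_one_dvd_mul_of_primeFactors_subset (hs : Odd s)
    (h : (c ^ s + 1).primeFactors ⊆ (c + 1).primeFactors) : c ^ s + 1 ∣ (c + 1) * s := by
  rw [← Nat.factorization_le_iff_dvd (by positivity) (mul_ne_zero (by omega) hs.pos.ne'),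
    Finsupp.le_def]
  intro q
  by_cases hq : q ∈ (c ^ s + 1).primeFactors
  swap
  · rw [← Nat.support_factorization, Finsupp.notMem_support_iff] at hq
    simp [hq]
  have hqp := Nat.prime_of_mem_primeFactors hq
  have hqc := Nat.dvd_of_mem_primeFactors (h hq)
  rw [Nat.factorization_mul (by omega) hs.pos.ne', Finsupp.add_apply]
  rcases eq_or_ne q 2 with rfl | hq2
  · have hc : Odd c := by
      rwa [← even_iff_two_dvd, Nat.even_add_one, Nat.not_even_iff_odd] at hqc
    rw [factorization_two_pow_add_one hc hs]
    omega
  · have : Fact q.Prime := ⟨hqp⟩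
    have hqc' : ¬ q ∣ c := fun hd =>
      hqp.one_lt.ne' (Nat.dvd_one.mp ((Nat.dvd_add_right hd).mp hqc))
    simp only [Nat.factorization_def _ hqp]
    rw [← one_pow s, padicValNat.pow_add_pow (hqp.odd_of_ne_two hq2) hqc hqc' hs, one_pow]

theorem mul_lt_pow_of_four_le (hc : 2 ≤ c) (hs : 4 ≤ s) : (c + 1) * s < c ^ s := by
  induction s, hs using Nat.le_induction with
  | base => nlinarith [pow_le_pow_left₀ (by omega : 0 ≤ 2) hc 3]
  | succ s hs ih =>
    calc (c + 1) * (s + 1) < 2 * c ^ s := by nlinarith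
      _ ≤ c ^ (s + 1) := by rw [pow_succ']; gcongr

theorem eq_two_and_eq_three_of_pow_add_one_le (hc : 2 ≤ c) (hs : 3 ≤ s)
    (h : c ^ s + 1 ≤ (c + 1) * s) : c = 2 ∧ s = 3 := by
  rcases hs.eq_or_lt with rfl | hs
  · refine ⟨?_, rfl⟩
    have : c ^ 3 = c * c * c := by ring
    nlinarith
  · have := mul_lt_pow_of_four_le hc hs
    omega

end LiftingTheExponent

theorem stmt5 (A m n : ℕ) (hA : 1 < A) (hn : 1 ≤ n) (hmn : m > n) :
    (A ^ m + 1).primeFactors = (A ^ n + 1).primeFactors ↔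
      m = 3 ∧ n = 1 ∧ A = 2 := by
  constructor
  · intro h
    obtain ⟨w, hw, hwm, hwn⟩ := exists_two_lt_dvd_pow_add_one hA hn hmn h
    have hM := odd_div_gcd_of_dvd_pow_add_one hw hwm hwn
    have hN : Odd (n / m.gcd n) := Nat.gcd_comm n m ▸ odd_div_gcd_of_dvd_pow_add_one hw hwn hwm
    have hsub := primeFactors_subset_primeFactors_pow_gcd_add_one (by omega) h
    rw [← pow_gcd_pow_div_gcd_left (x := A) (m := m) (n := n)] at hsub
    have hMN : n / m.gcd n < m / m.gcd n := Nat.div_lt_div_of_lt_of_dvd (m.gcd_dvd_left n) hmn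
    have hg : 0 < m.gcd n := Nat.gcd_pos_of_pos_left n (by omega)
    have three_le : 3 ≤ m / m.gcd n := by
      obtain ⟨_, _⟩ := hM
      obtain ⟨_, _⟩ := hN
      omega
    have hle := Nat.le_of_dvd (Nat.mul_pos (by positivity) hM.pos)
      (pow_add_one_dvd_mul_of_primeFactors_subset hM hsub)
    obtain ⟨hAg, hM3⟩ :=
      eq_two_and_eq_three_of_pow_add_one_le (hA.trans_le (Nat.le_self_pow hg.ne' A)) three_le hle
    have hg1 : m.gcd n = 1 := (hAg ▸ Nat.prime_two).eq_one_of_pow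
    rw [hg1, Nat.div_one] at hM3 hN hMN
    rw [hg1, pow_one] at hAg
    refine ⟨hM3, ?_, hAg⟩
    obtain ⟨_, _⟩ := hN
    omega
  · rintro ⟨rfl, rfl, rfl⟩
    rw [show 2 ^ 3 + 1 = 3 ^ 2 by norm_num, Nat.primeFactors_pow _ two_ne_zero, pow_one]
end

section
/- Let A > 1 and m, n ≥ 1 be integers. Then P(A^m + 1) = P(A^n - 1) if and only if one of the following holds: (i) m = 1, n = 1, A = 3; (ii) m = 3, n = 2, A = 2; (iii) m = 2, n = 4, A = 3; (iv) m = 1, n = 2, and A = 2^l + 1 for some integer l ≥ 0. -/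
/-!
Lifting the exponent, which for odd exponents holds at `p = 2` as well, shows that if `j` is odd
and every prime factor of `x ^ j ∓ 1` divides `x ∓ 1`, then `x ^ j ∓ 1 ∣ (x ∓ 1) * j`; comparing
sizes, `j = 1`, except for `2 ^ 3 + 1 = 9`.

If `A ^ m + 1` is a power of two, this gives `m = 1`; then `A + 1` and `A ^ n - 1` are powers of
two, which leaves `A = 3` and `n ∈ {1, 2}`. Otherwise every prime factor of `A ^ m + 1` divides
`A ^ gcd(2m, n) - 1`. An odd prime factor of `A ^ m + 1` rules out `gcd(2m, n) ∣ m`, and an odd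
prime `r` with `m = r s`, `gcd(2m, n) ∣ 2s` would make every prime factor of `(A ^ s) ^ r + 1`
divide `A ^ s + 1`, so `(A, m) = (2, 3)`. Hence `2m ∣ n`, say `n = 2mk`: an odd prime factor of
`A ^ (2m) + 1` excludes even `k`, and the first paragraph for `x = A ^ (2m)` excludes odd `k > 1`.
Finally, with `n = 2m`, every prime factor of `A ^ m - 1` divides `A ^ m + 1`, so `A ^ m - 1` is a
power of two, which leaves `m = 1, A = 2 ^ l + 1` and `m = 2, A = 3`.
-/

theorem padicValNat_pow_sub_pow_of_odd {p x y j : ℕ} [Fact p.Prime] (hyx : y < x)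
    (hxy : p ∣ x - y) (hx : ¬p ∣ x) (hj : Odd j) :
    padicValNat p (x ^ j - y ^ j) = padicValNat p (x - y) + padicValNat p j := by
  rcases (Fact.out : p.Prime).eq_two_or_odd' with rfl | hp
  · have h2j : ¬2 ∣ j := Nat.not_even_iff_odd.mpr hj ∘ even_iff_two_dvd.mpr
    rw [padicValNat.eq_zero_of_not_dvd h2j, add_zero, ← Nat.cast_inj (R := ℕ∞),
      padicValNat_eq_emultiplicity (Nat.sub_ne_zero_of_lt (Nat.pow_lt_pow_left hyx hj.pos.ne')),
      padicValNat_eq_emultiplicity (Nat.sub_ne_zero_of_lt hyx), ← Int.natCast_emultiplicity,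
      ← Int.natCast_emultiplicity, Nat.cast_sub (Nat.pow_le_pow_left hyx.le j),
      Nat.cast_sub hyx.le]
    push_cast
    rw [← Int.natCast_dvd_natCast] at hxy hx
    push_cast [Nat.cast_sub hyx.le] at hxy hx
    exact emultiplicity_pow_sub_pow_of_prime Int.prime_two hxy hx (by exact_mod_cast h2j)
  · exact padicValNat.pow_sub_pow hp hyx hxy hx hj.pos.ne'

theorem padicValNat_pow_add_pow_of_odd {p x y j : ℕ} [Fact p.Prime]
    (hxy : p ∣ x + y) (hx : ¬p ∣ x) (hj : Odd j) :
    padicValNat p (x ^ j + y ^ j) = padicValNat p (x + y) + padicValNat p j := by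
  rcases (Fact.out : p.Prime).eq_two_or_odd' with rfl | hp
  · have h2j : ¬2 ∣ j := Nat.not_even_iff_odd.mpr hj ∘ even_iff_two_dvd.mpr
    have hx0 : x ≠ 0 := by rintro rfl; exact hx (dvd_zero 2)
    rw [padicValNat.eq_zero_of_not_dvd h2j, add_zero, ← Nat.cast_inj (R := ℕ∞),
      padicValNat_eq_emultiplicity (by positivity),
      padicValNat_eq_emultiplicity (by positivity), ← Int.natCast_emultiplicity,
      ← Int.natCast_emultiplicity]
    rw [← Int.natCast_dvd_natCast] at hxy hx
    push_cast at hxy hx ⊢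
    rw [← sub_neg_eq_add, ← sub_neg_eq_add, ← hj.neg_pow]
    rw [← sub_neg_eq_add] at hxy
    exact emultiplicity_pow_sub_pow_of_prime Int.prime_two hxy hx (by exact_mod_cast h2j)
  · exact padicValNat.pow_add_pow hp hxy hx hj

theorem pow_sub_pow_dvd_sub_mul_of_primeFactors_subset {x y j : ℕ} (hyx : y < x)
    (hxy : x.Coprime y) (hj : Odd j) (h : (x ^ j - y ^ j).primeFactors ⊆ (x - y).primeFactors) :
    x ^ j - y ^ j ∣ (x - y) * j := by
  have hxj : x ^ j - y ^ j ≠ 0 := Nat.sub_ne_zero_of_lt (Nat.pow_lt_pow_left hyx hj.pos.ne')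
  have hx_y : x - y ≠ 0 := Nat.sub_ne_zero_of_lt hyx
  refine (Nat.factorization_prime_le_iff_dvd hxj (mul_ne_zero hx_y hj.pos.ne')).mp fun p hp => ?_
  by_cases hpd : p ∣ x ^ j - y ^ j
  · have hpxy : p ∣ x - y :=
      Nat.dvd_of_mem_primeFactors (h (Nat.mem_primeFactors.mpr ⟨hp, hpd, hxj⟩))
    have hpx : ¬p ∣ x := fun hpx => hp.ne_one <|
      Nat.eq_one_of_dvd_coprimes hxy hpx
        (by simpa [Nat.sub_sub_self hyx.le] using Nat.dvd_sub hpx hpxy)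
    have := Fact.mk hp
    rw [Nat.factorization_def _ hp, Nat.factorization_def _ hp, padicValNat.mul hx_y hj.pos.ne',
      padicValNat_pow_sub_pow_of_odd hyx hpxy hpx hj]
  · simp [Nat.factorization_eq_zero_of_not_dvd hpd]

theorem pow_add_pow_dvd_add_mul_of_primeFactors_subset {x y j : ℕ}
    (hxy : x.Coprime y) (hj : Odd j) (h : (x ^ j + y ^ j).primeFactors ⊆ (x + y).primeFactors) :
    x ^ j + y ^ j ∣ (x + y) * j := by
  have hx_y : x + y ≠ 0 := by rintro h0; simp_all [Nat.add_eq_zero_iff]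
  have hxj : x ^ j + y ^ j ≠ 0 := by
    rintro h0; simp_all [Nat.add_eq_zero_iff, hj.pos.ne']
  refine (Nat.factorization_prime_le_iff_dvd hxj (mul_ne_zero hx_y hj.pos.ne')).mp fun p hp => ?_
  by_cases hpd : p ∣ x ^ j + y ^ j
  · have hpxy : p ∣ x + y :=
      Nat.dvd_of_mem_primeFactors (h (Nat.mem_primeFactors.mpr ⟨hp, hpd, hxj⟩))
    have hpx : ¬p ∣ x := fun hpx => hp.ne_one <|
      Nat.eq_one_of_dvd_coprimes hxy hpx (by simpa using Nat.dvd_sub hpxy hpx)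
    have := Fact.mk hp
    rw [Nat.factorization_def _ hp, Nat.factorization_def _ hp, padicValNat.mul hx_y hj.pos.ne',
      padicValNat_pow_add_pow_of_odd hpxy hpx hj]
  · simp [Nat.factorization_eq_zero_of_not_dvd hpd]

theorem sq_mul_add_one_le_pow {x : ℕ} (hx : 2 ≤ x) (k : ℕ) : x ^ 2 * (k + 1) ≤ x ^ (k + 2) := by
  rw [pow_add, mul_comm (x ^ k)]
  exact Nat.mul_le_mul_left _ (Nat.lt_two_pow_self.trans_le (Nat.pow_le_pow_left hx k))

theorem eq_one_of_primeFactors_pow_sub_one_subset {x j : ℕ} (hx : 2 ≤ x) (hj : Odd j)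
    (h : (x ^ j - 1).primeFactors ⊆ (x - 1).primeFactors) : j = 1 := by
  have hdvd := pow_sub_pow_dvd_sub_mul_of_primeFactors_subset (y := 1) (by omega)
    (Nat.coprime_one_right x) hj (by simpa using h)
  rw [one_pow] at hdvd
  rcases hj with ⟨k, rfl⟩
  rcases k with _ | k
  · rfl
  exfalso
  have hle := Nat.le_of_dvd (Nat.mul_pos (by omega) (by omega)) hdvd
  rw [show 2 * (k + 1) + 1 = 2 * k + 1 + 2 by ring, Nat.sub_le_iff_le_add] at hle
  have hpow := sq_mul_add_one_le_pow hx (2 * k + 1)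
  obtain ⟨a, rfl⟩ : ∃ a, x = a + 2 := ⟨x - 2, by omega⟩
  rw [show a + 2 - 1 = a + 1 by omega] at hle
  nlinarith [Nat.zero_le (a ^ 2 * k), Nat.zero_le (a * k)]

theorem eq_one_or_of_primeFactors_pow_add_one_subset {x j : ℕ} (hx : 2 ≤ x) (hj : Odd j)
    (h : (x ^ j + 1).primeFactors ⊆ (x + 1).primeFactors) : j = 1 ∨ x = 2 ∧ j = 3 := by
  have hdvd := pow_add_pow_dvd_add_mul_of_primeFactors_subset (y := 1)
    (Nat.coprime_one_right x) hj (by simpa using h)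
  rw [one_pow] at hdvd
  rcases hj with ⟨k, rfl⟩
  rcases k with _ | k
  · exact Or.inl rfl
  have hle := Nat.le_of_dvd (by positivity) hdvd
  rw [show 2 * (k + 1) + 1 = 2 * k + 1 + 2 by ring] at hle ⊢
  have hpow := sq_mul_add_one_le_pow hx (2 * k + 1)
  have hx2 : x = 2 := by
    by_contra hx2
    have hx3 : 3 ≤ x := by omega
    nlinarith [Nat.mul_le_mul_left k hx3, Nat.mul_le_mul_left (k * x) hx3]
  subst hx2
  right
  refine ⟨rfl, ?_⟩
  omega

theorem exists_eq_pow_of_primeFactors_subset_singleton {n p : ℕ} (hn : n ≠ 0)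
    (h : n.primeFactors ⊆ {p}) : ∃ e, n = p ^ e :=
  ⟨_, Nat.eq_prime_pow_of_unique_prime_dvd hn fun hd hdn =>
    Finset.mem_singleton.mp (h (Nat.mem_primeFactors.mpr ⟨hd, hdn, hn⟩))⟩

theorem sq_sub_one_eq_mul (x : ℕ) : x ^ 2 - 1 = (x + 1) * (x - 1) := by
  simpa using Nat.sq_sub_sq x 1

theorem eq_two_of_dvd_add_one_of_dvd_sub_one {p a : ℕ} (hp : p.Prime) (h₁ : p ∣ a + 1)
    (h₂ : p ∣ a - 1) : p = 2 := by
  rcases Nat.eq_zero_or_pos a with rfl | ha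
  · exact absurd (Nat.dvd_one.mp h₁) hp.ne_one
  have h2 : p ∣ 2 := by simpa [show a + 1 - (a - 1) = 2 by omega] using Nat.dvd_sub h₁ h₂
  exact (Nat.prime_dvd_prime_iff_eq hp Nat.prime_two).mp h2

theorem two_dvd_sub_one_of_two_dvd_pow_sub_one {A m : ℕ} (hm : m ≠ 0) (h : 2 ∣ A ^ m - 1) :
    2 ∣ A - 1 := by
  rcases Nat.eq_zero_or_pos A with rfl | hA
  · simp
  have hAm := Nat.pow_pos (n := m) hA
  have : ¬2 ∣ A := fun h2 => by have := dvd_pow h2 hm; omega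
  omega

theorem not_primeFactors_sq_add_one_subset_two {x : ℕ} (hx : 2 ≤ x) :
    ¬(x ^ 2 + 1).primeFactors ⊆ {2} := by
  intro h
  obtain ⟨e, he⟩ := exists_eq_pow_of_primeFactors_subset_singleton (by positivity) h
  have hmod : (x ^ 2 + 1) % 4 = 1 ∨ (x ^ 2 + 1) % 4 = 2 := by
    rcases Nat.even_or_odd x with ⟨t, rfl⟩ | ⟨t, rfl⟩ <;> ring_nf <;> omega
  have hx4 : 4 ≤ x ^ 2 := by nlinarith
  rcases e with _ | _ | e
  · simp at he; omega
  · simp at he; omega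
  · rw [pow_add] at he; omega

theorem eq_two_or_three_of_primeFactors_sq_sub_one_subset {p x : ℕ} (hp : p.Prime) (hx : 2 ≤ x)
    (h : (x ^ 2 - 1).primeFactors ⊆ {p}) : x = 2 ∨ x = 3 := by
  have hx4 : 4 ≤ x ^ 2 := by nlinarith
  obtain ⟨e, he⟩ := exists_eq_pow_of_primeFactors_subset_singleton (by omega) h
  rw [sq_sub_one_eq_mul] at he
  obtain ⟨a, -, ha⟩ := (Nat.dvd_prime_pow hp).mp (Dvd.intro _ he)
  obtain ⟨b, -, hb⟩ := (Nat.dvd_prime_pow hp).mp (Dvd.intro_left _ he)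
  have hba : b ≤ a := (Nat.pow_le_pow_iff_right hp.one_lt).mp (by omega)
  have hdvd : x - 1 ∣ x + 1 := by rw [ha, hb]; exact pow_dvd_pow p hba
  have h2 : x - 1 ∣ 2 := by simpa [show x + 1 - (x - 1) = 2 by omega] using Nat.dvd_sub hdvd dvd_rfl
  have := Nat.le_of_dvd two_pos h2
  omega

theorem primeFactors_pow_add_one_subset_add_one {x r : ℕ} (hr : r ≠ 0)
    (h : (x ^ r + 1).primeFactors ⊆ (x ^ 2 - 1).primeFactors) :
    (x ^ r + 1).primeFactors ⊆ (x + 1).primeFactors := by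
  intro p hp
  have hpp := Nat.prime_of_mem_primeFactors hp
  have hpr := Nat.dvd_of_mem_primeFactors hp
  have hpx := Nat.dvd_of_mem_primeFactors (h hp)
  rw [sq_sub_one_eq_mul] at hpx
  refine Nat.mem_primeFactors.mpr ⟨hpp, (hpp.dvd_mul.mp hpx).elim id fun hp1 => ?_, by omega⟩
  obtain rfl : p = 2 := eq_two_of_dvd_add_one_of_dvd_sub_one hpp hpr
    (hp1.trans (Nat.sub_one_dvd_pow_sub_one x r))
  have : ¬2 ∣ x := fun h2 => by have := dvd_pow h2 hr; omega
  omega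

theorem primeFactors_pow_add_one_subset_pow_gcd_sub_one {A m n : ℕ}
    (h : (A ^ m + 1).primeFactors ⊆ (A ^ n - 1).primeFactors) :
    (A ^ m + 1).primeFactors ⊆ (A ^ Nat.gcd (2 * m) n - 1).primeFactors := by
  intro p hp
  obtain ⟨hpp, hpn, hn⟩ := Nat.mem_primeFactors.mp (h hp)
  have hp2m : p ∣ A ^ (2 * m) - 1 := by
    rw [pow_mul', sq_sub_one_eq_mul]
    exact (Nat.dvd_of_mem_primeFactors hp).mul_right _
  have hgcd := Nat.pow_sub_one_gcd_pow_sub_one A (2 * m) n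
  exact Nat.mem_primeFactors.mpr
    ⟨hpp, hgcd ▸ Nat.dvd_gcd hp2m hpn, hgcd ▸ Nat.gcd_ne_zero_right hn⟩

theorem two_mul_dvd_of_primeFactors_pow_add_one_subset {A m n : ℕ} (hA : 2 ≤ A)
    (hodd : ¬(A ^ m + 1).primeFactors ⊆ {2}) (hAm : ¬(A = 2 ∧ m = 3))
    (h : (A ^ m + 1).primeFactors ⊆ (A ^ n - 1).primeFactors) : 2 * m ∣ n := by
  have hg := primeFactors_pow_add_one_subset_pow_gcd_sub_one h
  set g := Nat.gcd (2 * m) n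
  obtain ⟨u, hu⟩ : g ∣ 2 * m := Nat.gcd_dvd_left _ _
  by_contra hmn
  have hu1 : u ≠ 1 := by
    rintro rfl
    exact hmn (by rw [hu, mul_one]; exact Nat.gcd_dvd_right _ _)
  obtain ⟨r, hr, w, rfl⟩ := Nat.exists_prime_and_dvd hu1
  rcases hr.eq_two_or_odd' with rfl | hr_odd
  · have hgm : g ∣ m := ⟨w, by linarith⟩
    refine hodd fun p hp => Finset.mem_singleton.mpr ?_
    exact eq_two_of_dvd_add_one_of_dvd_sub_one (Nat.prime_of_mem_primeFactors hp)
      (Nat.dvd_of_mem_primeFactors hp)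
      ((Nat.dvd_of_mem_primeFactors (hg hp)).trans (Nat.pow_sub_one_dvd_pow_sub_one A hgm))
  · obtain ⟨s, rfl⟩ : r ∣ m := by
      refine (hr.dvd_mul.mp (⟨g * w, by rw [hu]; ring⟩ : r ∣ 2 * m)).resolve_left fun hr2 => ?_
      rw [(Nat.prime_dvd_prime_iff_eq hr Nat.prime_two).mp hr2] at hr_odd
      exact absurd hr_odd (by decide)
    have hs : s ≠ 0 := by rintro rfl; exact hodd (by simp [Nat.prime_two.primeFactors])
    have hgs : g ∣ 2 * s := ⟨w, by nlinarith [hr.pos]⟩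
    have hsub : ((A ^ s) ^ r + 1).primeFactors ⊆ ((A ^ s) ^ 2 - 1).primeFactors := by
      rw [← pow_mul, mul_comm s, ← pow_mul, mul_comm s]
      exact hg.trans (Nat.primeFactors_mono (Nat.pow_sub_one_dvd_pow_sub_one A hgs)
        (Nat.sub_ne_zero_of_lt (Nat.one_lt_pow (by omega) (by omega))))
    have hAs : 2 ≤ A ^ s := hA.trans (Nat.le_self_pow hs A)
    rcases eq_one_or_of_primeFactors_pow_add_one_subset hAs hr_odd
      (primeFactors_pow_add_one_subset_add_one hr.ne_zero hsub) with hr1 | ⟨hAs2, rfl⟩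
    · exact hr.ne_one hr1
    · obtain ⟨rfl, rfl⟩ := Nat.prime_two.pow_eq_iff.mp hAs2
      exact hAm ⟨rfl, rfl⟩

theorem eq_one_of_primeFactors_pow_two_mul_sub_one_subset {x k : ℕ} (hx : 2 ≤ x) (hk : k ≠ 0)
    (h : (x ^ (2 * k) - 1).primeFactors ⊆ (x + 1).primeFactors) : k = 1 := by
  have hx4 : 4 ≤ x ^ 2 := by nlinarith
  have hx1 : (x + 1).primeFactors ⊆ (x ^ 2 - 1).primeFactors :=
    Nat.primeFactors_mono (sq_sub_one_eq_mul x ▸ dvd_mul_right _ _) (by omega)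
  rcases Nat.even_or_odd k with ⟨k, rfl⟩ | hk_odd
  · obtain ⟨q, hq, hq2⟩ := Finset.not_subset.mp (not_primeFactors_sq_add_one_subset_two hx)
    have hdvd : x ^ 2 + 1 ∣ x ^ (2 * (k + k)) - 1 := by
      refine Dvd.dvd.trans ?_ (Nat.pow_sub_one_dvd_pow_sub_one x (⟨k, by ring⟩ : 4 ∣ 2 * (k + k)))
      rw [show 4 = 2 * 2 by rfl, pow_mul, sq_sub_one_eq_mul]
      exact dvd_mul_right _ _
    have hxk : x ^ (2 * (k + k)) - 1 ≠ 0 :=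
      Nat.sub_ne_zero_of_lt (Nat.one_lt_pow (by omega) (by omega))
    have hq' := h (Nat.primeFactors_mono hdvd hxk hq)
    exact absurd (eq_two_of_dvd_add_one_of_dvd_sub_one (Nat.prime_of_mem_primeFactors hq)
      (Nat.dvd_of_mem_primeFactors hq) (Nat.dvd_of_mem_primeFactors (hx1 hq')))
      (by simpa using hq2)
  · rw [pow_mul] at h
    exact eq_one_of_primeFactors_pow_sub_one_subset (by omega) hk_odd (h.trans hx1)

theorem eq_one_of_primeFactors_pow_add_one_subset_two {A m : ℕ} (hA : 2 ≤ A) (hm : m ≠ 0)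
    (h : (A ^ m + 1).primeFactors ⊆ {2}) : m = 1 := by
  have hsub : (A ^ m + 1).primeFactors ⊆ (A + 1).primeFactors := by
    intro p hp
    obtain rfl := Finset.mem_singleton.mp (h hp)
    have h2 := Nat.dvd_of_mem_primeFactors hp
    have : ¬2 ∣ A := fun h2A => by have := dvd_pow h2A hm; omega
    exact Nat.mem_primeFactors.mpr ⟨Nat.prime_two, by omega, by omega⟩
  rcases Nat.even_or_odd m with ⟨k, rfl⟩ | hm_odd
  · rw [← two_mul, pow_mul'] at h
    exact absurd h
      (not_primeFactors_sq_add_one_subset_two (hA.trans (Nat.le_self_pow (by omega) A)))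
  · rcases eq_one_or_of_primeFactors_pow_add_one_subset hA hm_odd hsub with hm1 | ⟨rfl, rfl⟩
    · exact hm1
    · have h3 := h (Nat.mem_primeFactors.mpr ⟨Nat.prime_three, ⟨3, rfl⟩, by norm_num⟩)
      simp at h3

theorem eq_three_of_primeFactors_add_one_eq_pow_sub_one {A n : ℕ} (hA : 2 ≤ A)
    (h2 : (A + 1).primeFactors ⊆ {2}) (h : (A + 1).primeFactors = (A ^ n - 1).primeFactors) :
    A = 3 ∧ (n = 1 ∨ n = 2) := by
  obtain ⟨p, hp⟩ := Nat.nonempty_primeFactors.mpr (by omega : 1 < A + 1)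
  have h2A : 2 ∣ A + 1 := Nat.dvd_of_mem_primeFactors (Finset.mem_singleton.mp (h2 hp) ▸ hp)
  have hA1 : 2 ∈ (A - 1).primeFactors :=
    Nat.mem_primeFactors.mpr ⟨Nat.prime_two, by omega, by omega⟩
  have hn : n ≠ 0 := by rintro rfl; simp at h; omega
  have hsub : (A ^ n - 1).primeFactors ⊆ {2} := h ▸ h2
  rcases Nat.even_or_odd n with ⟨k, rfl⟩ | hn_odd
  · rw [← two_mul, pow_mul'] at hsub
    rcases eq_two_or_three_of_primeFactors_sq_sub_one_subset Nat.prime_two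
      (hA.trans (Nat.le_self_pow (by omega) A)) hsub with h2 | h3
    · obtain ⟨rfl, -⟩ := Nat.prime_two.pow_eq_iff.mp h2
      omega
    · obtain ⟨rfl, rfl⟩ := Nat.prime_three.pow_eq_iff.mp h3
      exact ⟨rfl, Or.inr rfl⟩
  · obtain rfl := eq_one_of_primeFactors_pow_sub_one_subset hA hn_odd
      (hsub.trans (Finset.singleton_subset_iff.mpr hA1))
    rw [pow_one] at hsub
    have hsq : (A ^ 2 - 1).primeFactors ⊆ {2} := by
      rw [sq_sub_one_eq_mul, Nat.primeFactors_mul (by omega) (by omega)]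
      exact Finset.union_subset h2 hsub
    rcases eq_two_or_three_of_primeFactors_sq_sub_one_subset Nat.prime_two hA hsq with rfl | rfl
    · omega
    · exact ⟨rfl, Or.inl rfl⟩

theorem eq_two_pow_add_one_or_eq_three_of_primeFactors_pow_add_one_eq {A m : ℕ} (hA : 2 ≤ A)
    (h : (A ^ m + 1).primeFactors = (A ^ (2 * m) - 1).primeFactors) :
    (m = 1 ∧ ∃ l, A = 2 ^ l + 1) ∨ (m = 2 ∧ A = 3) := by
  have hm : m ≠ 0 := by rintro rfl; simp at h
  have hA2m : A ^ (2 * m) - 1 ≠ 0 := Nat.sub_ne_zero_of_lt (Nat.one_lt_pow (by omega) (by omega))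
  have hsub : (A ^ m - 1).primeFactors ⊆ {2} := by
    intro p hp
    have hp' : p ∈ (A ^ m + 1).primeFactors := h ▸ Nat.primeFactors_mono
      (Nat.pow_sub_one_dvd_pow_sub_one A (dvd_mul_left m 2)) hA2m hp
    exact Finset.mem_singleton.mpr (eq_two_of_dvd_add_one_of_dvd_sub_one
      (Nat.prime_of_mem_primeFactors hp) (Nat.dvd_of_mem_primeFactors hp')
      (Nat.dvd_of_mem_primeFactors hp))
  rcases Nat.even_or_odd m with ⟨k, rfl⟩ | hm_odd
  · rw [← two_mul, pow_mul'] at hsub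
    rcases eq_two_or_three_of_primeFactors_sq_sub_one_subset Nat.prime_two
      (hA.trans (Nat.le_self_pow (by omega) A)) hsub with h2 | h3
    · rw [h2] at hsub
      have h3 := hsub (Nat.mem_primeFactors.mpr ⟨Nat.prime_three, dvd_rfl, by norm_num⟩)
      simp at h3
    · obtain ⟨rfl, rfl⟩ := Nat.prime_three.pow_eq_iff.mp h3
      exact Or.inr ⟨rfl, rfl⟩
  · have hA1 : (A ^ m - 1).primeFactors ⊆ (A - 1).primeFactors := by
      intro p hp
      obtain rfl := Finset.mem_singleton.mp (hsub hp)
      exact Nat.mem_primeFactors.mpr ⟨Nat.prime_two,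
        two_dvd_sub_one_of_two_dvd_pow_sub_one hm (Nat.dvd_of_mem_primeFactors hp), by omega⟩
    obtain rfl := eq_one_of_primeFactors_pow_sub_one_subset hA hm_odd hA1
    rw [pow_one] at hsub
    obtain ⟨l, hl⟩ := exists_eq_pow_of_primeFactors_subset_singleton (by omega) hsub
    exact Or.inl ⟨rfl, l, by omega⟩

theorem eq_two_of_primeFactors_two_pow_sub_one_eq_singleton {n : ℕ}
    (h : (2 ^ n - 1).primeFactors = {3}) : n = 2 := by
  have h3 : 3 ∣ 2 ^ n - 1 := Nat.dvd_of_mem_primeFactors (h ▸ Finset.mem_singleton_self 3)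
  obtain ⟨k, rfl⟩ : Even n := by
    refine Nat.not_odd_iff_even.mp fun ⟨k, hk⟩ => ?_
    have : 2 ^ n % 3 = 2 := by rw [hk, pow_succ, pow_mul, Nat.mul_mod, Nat.pow_mod]; norm_num
    generalize 2 ^ n = N at *
    omega
  have hk : k ≠ 0 := by rintro rfl; simp at h
  rw [← two_mul, pow_mul'] at h
  rcases eq_two_or_three_of_primeFactors_sq_sub_one_subset Nat.prime_three
    (Nat.le_self_pow hk 2) h.subset with h2 | h3
  · obtain rfl : k = 1 := Nat.pow_eq_self_iff (le_refl 2) |>.mp h2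
    rfl
  · have := Nat.two_pow_mod_two_eq_zero.mpr (Nat.pos_of_ne_zero hk)
    omega

theorem primeFactors_two_pow_add_two (l : ℕ) :
    (2 ^ l + 1 + 1).primeFactors = ((2 ^ l + 1) ^ 2 - 1).primeFactors := by
  rw [sq_sub_one_eq_mul, add_tsub_cancel_right,
    Nat.primeFactors_mul (by positivity) (by positivity), eq_comm, Finset.union_eq_left]
  intro p hp
  obtain ⟨hpp, hpd, -⟩ := Nat.mem_primeFactors.mp hp
  obtain rfl := (Nat.prime_dvd_prime_iff_eq hpp Nat.prime_two).mp (hpp.dvd_of_dvd_pow hpd)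
  have hl : l ≠ 0 := by rintro rfl; simp at hpd
  have := dvd_pow_self 2 hl
  exact Nat.mem_primeFactors.mpr ⟨Nat.prime_two, by omega, by positivity⟩

theorem eq_two_mul_of_primeFactors_pow_add_one_eq {A m n : ℕ} (hA : 2 ≤ A)
    (hodd : ¬(A ^ m + 1).primeFactors ⊆ {2}) (hAm : ¬(A = 2 ∧ m = 3))
    (h : (A ^ m + 1).primeFactors = (A ^ n - 1).primeFactors) : n = 2 * m := by
  have hm : m ≠ 0 := by rintro rfl; exact hodd (by simp [Nat.prime_two.primeFactors])
  obtain ⟨k, rfl⟩ := two_mul_dvd_of_primeFactors_pow_add_one_subset hA hodd hAm h.subset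
  have hk : k ≠ 0 := by rintro rfl; simp at h; omega
  obtain rfl : k = 1 := by
    refine eq_one_of_primeFactors_pow_two_mul_sub_one_subset (x := A ^ m)
      (hA.trans (Nat.le_self_pow hm A)) hk ?_
    rw [← pow_mul, show m * (2 * k) = 2 * m * k by ring, ← h]
  exact mul_one _

theorem primeFactors_pow_add_one_eq_pow_sub_one_of_cases {A m n : ℕ}
    (h : (m = 1 ∧ n = 1 ∧ A = 3) ∨ (m = 3 ∧ n = 2 ∧ A = 2) ∨ (m = 2 ∧ n = 4 ∧ A = 3) ∨
      (m = 1 ∧ n = 2 ∧ ∃ l : ℕ, A = 2 ^ l + 1)) :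
    (A ^ m + 1).primeFactors = (A ^ n - 1).primeFactors := by
  rcases h with ⟨rfl, rfl, rfl⟩ | ⟨rfl, rfl, rfl⟩ | ⟨rfl, rfl, rfl⟩ | ⟨rfl, rfl, l, rfl⟩
  · rw [show 3 ^ 1 + 1 = 2 ^ 2 by rfl, Nat.primeFactors_pow _ two_ne_zero]
    rfl
  · rw [show 2 ^ 3 + 1 = 3 ^ 2 by rfl, Nat.primeFactors_pow _ two_ne_zero]
    rfl
  · rw [show 3 ^ 4 - 1 = (3 ^ 2 + 1) * 2 ^ 3 by rfl,
      Nat.primeFactors_mul (by norm_num) (by norm_num), Nat.primeFactors_pow _ (by norm_num),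
      Finset.union_eq_left.mpr]
    exact Nat.primeFactors_mono ⟨5, rfl⟩ (by norm_num)
  · rw [pow_one]
    exact primeFactors_two_pow_add_two l

theorem stmt6_general (A m n : ℕ) (hA : 1 < A) (hm : 1 ≤ m) :
    (A ^ m + 1).primeFactors = (A ^ n - 1).primeFactors ↔
      (m = 1 ∧ n = 1 ∧ A = 3) ∨
      (m = 3 ∧ n = 2 ∧ A = 2) ∨
      (m = 2 ∧ n = 4 ∧ A = 3) ∨
      (m = 1 ∧ n = 2 ∧ ∃ l : ℕ, A = 2 ^ l + 1) := by
  refine ⟨fun h => ?_, primeFactors_pow_add_one_eq_pow_sub_one_of_cases⟩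
  by_cases h2 : (A ^ m + 1).primeFactors ⊆ {2}
  · obtain rfl := eq_one_of_primeFactors_pow_add_one_subset_two hA (by omega) h2
    rw [pow_one] at h h2
    obtain ⟨rfl, rfl | rfl⟩ := eq_three_of_primeFactors_add_one_eq_pow_sub_one hA h2 h
    · exact Or.inl ⟨rfl, rfl, rfl⟩
    · exact Or.inr (Or.inr (Or.inr ⟨rfl, rfl, 1, rfl⟩))
  by_cases hAm : A = 2 ∧ m = 3
  · obtain ⟨rfl, rfl⟩ := hAm
    refine Or.inr (Or.inl ⟨rfl, eq_two_of_primeFactors_two_pow_sub_one_eq_singleton ?_, rfl⟩)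
    rw [← h, show 2 ^ 3 + 1 = 3 ^ 2 by rfl, Nat.primeFactors_prime_pow two_ne_zero Nat.prime_three]
  obtain rfl := eq_two_mul_of_primeFactors_pow_add_one_eq hA h2 hAm h
  rcases eq_two_pow_add_one_or_eq_three_of_primeFactors_pow_add_one_eq hA h with
    ⟨rfl, hl⟩ | ⟨rfl, rfl⟩
  · exact Or.inr (Or.inr (Or.inr ⟨rfl, rfl, hl⟩))
  · exact Or.inr (Or.inr (Or.inl ⟨rfl, rfl, rfl⟩))

theorem stmt6 (A m n : ℕ) (hA : 1 < A) (hm : 1 ≤ m) (hn : 1 ≤ n) :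
    (A ^ m + 1).primeFactors = (A ^ n - 1).primeFactors ↔
      (m = 1 ∧ n = 1 ∧ A = 3) ∨
      (m = 3 ∧ n = 2 ∧ A = 2) ∨
      (m = 2 ∧ n = 4 ∧ A = 3) ∨
      (m = 1 ∧ n = 2 ∧ ∃ l : ℕ, A = 2 ^ l + 1) :=
  stmt6_general A m n hA hm
end

section
/- For positive integers p, r and distinct positive integers M, N, we have (2^M - 1)^p ≠ (2^N - 1)^r. -/
theorem root_extract {n k : ℕ} (hn : n ≠ 0) (h : ∀ q, k ∣ n.factorization q) :
    ∃ c, n = c ^ k := by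
  refine ⟨(n.factorization.prod fun q e => q ^ (e / k)), ?_⟩
  conv_lhs => rw [← Nat.factorization_prod_pow_eq_self hn]
  rw [Finsupp.prod, Finsupp.prod, ← Finset.prod_pow]
  refine Finset.prod_congr rfl fun q _ => ?_
  rw [← pow_mul, Nat.div_mul_cancel (h q)]

theorem mersenne_not_pow {c k N : ℕ} (hc : 2 ≤ c) (hk : 2 ≤ k) (hN : 2 ≤ N) :
    2 ^ N - 1 ≠ c ^ k := by
  intro h
  have h4 : 4 ∣ 2 ^ N := by
    have : (2:ℕ)^2 ∣ 2^N := pow_dvd_pow 2 hN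
    simpa using this
  have h2N : 4 ≤ 2 ^ N := Nat.le_of_dvd (by positivity) h4
  have hoddM : Odd (2 ^ N - 1) := by
    have he : Even (2 ^ N) := by rcases h4 with ⟨t, ht⟩; exact ⟨2*t, by omega⟩
    exact Nat.Even.sub_odd (by omega) he odd_one
  have hoddck : Odd (c ^ k) := h ▸ hoddM
  have hoddc : Odd c := by
    rcases Nat.even_or_odd c with hc' | hc'
    · exfalso
      have hck2 : c ^ k % 2 = 1 := Nat.odd_iff.mp hoddck
      obtain ⟨t, rfl⟩ := hc'
      have : (t + t) ^ k % 2 = 0 := by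
        have : 2 ∣ (t + t) ^ k := dvd_pow (⟨t, by ring⟩) (by omega)
        omega
      omega
    · exact hc'
  rcases Nat.even_or_odd k with hke | hko
  · -- k even
    obtain ⟨j, rfl⟩ := hke
    have hd : Odd (c ^ j) := hoddc.pow
    set d := c ^ j with hdj
    have hck : c ^ (j + j) = d * d := by rw [← pow_add]
    have hd2 : d % 2 = 1 := Nat.odd_iff.mp hd
    have hd4 : d % 4 = 1 ∨ d % 4 = 3 := by omega
    have hsq : (d * d) % 4 = 1 := by
      rw [Nat.mul_mod]; rcases hd4 with h' | h' <;> rw [h']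
    have hm : (2 ^ N - 1) % 4 = 3 := by omega
    rw [h, hck] at hm
    omega
  · -- k odd
    have hZ : ((c : ℤ)) ^ k + 1 = 2 ^ N := by
      have h' := congrArg (fun x : ℕ => (x : ℤ)) h
      simp only [Nat.cast_sub (by omega : 1 ≤ 2^N)] at h'
      push_cast at h'
      linarith
    set S : ℤ := ∑ i ∈ Finset.range k, (-(c : ℤ)) ^ i with hS
    have hfac : S * ((c : ℤ) + 1) = (c : ℤ) ^ k + 1 := by
      have hg := geom_sum_mul (-(c : ℤ)) k
      have h2 : (-(c:ℤ)) ^ k = -((c:ℤ) ^ k) := hko.neg_pow (c:ℤ)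
      nlinarith [hg]
    have hfac2 : S * ((c : ℤ) + 1) = 2 ^ N := by rw [hfac, hZ]
    have hScast : ((S : ℤ) : ZMod 2) = 1 := by
      have hc2 : ((c : ℤ) : ZMod 2) = 1 := by
        have : (c : ZMod 2) = 1 := by
          rw [← ZMod.natCast_mod, Nat.odd_iff.mp hoddc]; rfl
        simpa using this
      rw [hS]
      push_cast [hc2]
      have hneg : (-1 : ZMod 2) = 1 := by decide
      rw [hneg]
      simp only [one_pow, Finset.sum_const, Finset.card_range, nsmul_eq_mul, mul_one]
      rw [← ZMod.natCast_mod, Nat.odd_iff.mp hko]; rfl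
    have hSodd : Odd S := by
      rw [← Int.not_even_iff_odd]
      intro hev
      obtain ⟨t, ht⟩ := hev
      rw [ht] at hScast
      push_cast at hScast
      rw [CharTwo.add_self_eq_zero] at hScast
      exact absurd hScast (by decide)
    have hSpos : 0 < S := by
      have h2 : 0 < S * ((c:ℤ)+1) := by rw [hfac2]; positivity
      rcases mul_pos_iff.mp h2 with ⟨h', _⟩ | ⟨_, h'⟩
      · exact h'
      · have : (0:ℤ) < (c:ℤ) + 1 := by positivity
        linarith
    have hSdvd : S.natAbs ∣ 2 ^ N := by
      have hd : S ∣ (2:ℤ) ^ N := ⟨(c:ℤ)+1, hfac2.symm⟩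
      have h2 := Int.natAbs_dvd_natAbs.mpr hd
      rwa [Int.natAbs_pow, show (2:ℤ).natAbs = 2 from rfl] at h2
    have hS1 : S.natAbs = 1 := by
      have hcop : Nat.Coprime S.natAbs 2 := by
        rw [Nat.coprime_two_right]
        exact Int.natAbs_odd.mpr hSodd
      exact Nat.Coprime.eq_one_of_dvd (hcop.pow_right N) hSdvd
    have hSeq : S = 1 := by omega
    rw [hSeq, one_mul] at hfac2
    have hck : (c : ℤ) ^ k = (c : ℤ) := by linarith [hZ, hfac2]
    have hck' : c ^ k = c ^ 1 := by
      have := @Nat.cast_injective ℤ _ _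
      rw [pow_one]
      exact_mod_cast hck
    have := Nat.pow_right_injective hc hck'
    omega

theorem key (p r M N : ℕ) (hp : 0 < p) (hr : 0 < r) (hM : 0 < M)
    (hlt : M < N) :
    (2 ^ M - 1) ^ p ≠ (2 ^ N - 1) ^ r := by
  intro h
  have hN2 : 2 ≤ N := by omega
  have hBN : 4 ≤ 2 ^ N := by
    calc (4:ℕ) = 2^2 := rfl
    _ ≤ 2^N := Nat.pow_le_pow_right (by norm_num) hN2
  set B := 2 ^ N - 1 with hB
  have hB3 : 3 ≤ B := by omega
  rcases Nat.lt_or_ge M 2 with hM1 | hM2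
  · -- M = 1
    have hM1' : M = 1 := by omega
    rw [hM1'] at h
    norm_num at h
    have : 1 < B ^ r := Nat.one_lt_pow (by omega) (by omega)
    omega
  · set A := 2 ^ M - 1 with hA
    have hA3 : 3 ≤ A := by
      have : 4 ≤ 2^M := by
        calc (4:ℕ) = 2^2 := rfl
        _ ≤ 2^M := Nat.pow_le_pow_right (by norm_num) hM2
      omega
    have hAB : A < B := by
      have : 2^M < 2^N := Nat.pow_lt_pow_right (by norm_num) hlt
      omega
    have hpr : r < p := by
      have h1 : A ^ r < B ^ r := Nat.pow_lt_pow_left hAB (by omega)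
      rw [← h] at h1
      exact (Nat.pow_lt_pow_iff_right (by omega : 1 < A)).mp h1
    set g := Nat.gcd p r with hg
    have hgpos : 0 < g := Nat.gcd_pos_of_pos_left r hp
    set p' := p / g with hp'
    set r' := r / g with hr'
    have hpp : p' * g = p := Nat.div_mul_cancel (Nat.gcd_dvd_left p r)
    have hrr : r' * g = r := Nat.div_mul_cancel (Nat.gcd_dvd_right p r)
    have hco : Nat.Coprime p' r' := Nat.coprime_div_gcd_div_gcd hgpos
    have hr'1 : 1 ≤ r' := by
      rcases Nat.eq_zero_or_pos r' with h0 | h0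
      · rw [h0] at hrr; omega
      · exact h0
    have hp'r' : r' < p' := by
      by_contra hcon
      push_neg at hcon
      have : p ≤ r := by
        calc p = p' * g := hpp.symm
        _ ≤ r' * g := Nat.mul_le_mul_right g hcon
        _ = r := hrr
      omega
    have heq2 : A ^ p' = B ^ r' := by
      have heq : (A ^ p') ^ g = (B ^ r') ^ g := by
        rw [← pow_mul, ← pow_mul, hpp, hrr]; exact h
      exact Nat.pow_left_injective (by omega) heq
    have hfact : ∀ q, p' ∣ B.factorization q := by
      intro q
      have hc := congrArg Nat.factorization heq2
      rw [Nat.factorization_pow, Nat.factorization_pow] at hc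
      have hcq : p' * A.factorization q = r' * B.factorization q := by
        have := congrArg (fun f => f q) hc
        simpa using this
      have hdvd : p' ∣ r' * B.factorization q := ⟨A.factorization q, hcq.symm⟩
      exact (Nat.Coprime.dvd_of_dvd_mul_left hco hdvd)
    obtain ⟨c, hcB⟩ := root_extract (by omega : B ≠ 0) hfact
    have hc2 : 2 ≤ c := by
      rcases Nat.lt_or_ge c 2 with hcl | hcl
      · interval_cases c
        · rw [zero_pow (by omega)] at hcB; omega
        · rw [one_pow] at hcB; omega
      · exact hcl
    exact mersenne_not_pow hc2 (by omega) hN2 hcB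

theorem stmt9 (p r M N : ℕ) (hp : 0 < p) (hr : 0 < r) (hM : 0 < M) (hN : 0 < N)
    (hMN : M ≠ N) :
    (2 ^ M - 1) ^ p ≠ (2 ^ N - 1) ^ r := by
  rcases hMN.lt_or_gt with hlt | hlt
  · exact key p r M N hp hr hM hlt
  · exact (key r p N M hr hp hN hlt).symm
end

section
/- If positive integers q, s, M, N with M > N satisfy (2^M + 1)^q = (2^N + 1)^s, then M = 3, N = 1, and s = 2q. -/
/-- A natural number all of whose prime multiplicities are divisible by `k` is a `k`-th power. -/
lemma nth_pow_of_dvd_factorization (n k : ℕ) (hn : n ≠ 0)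
    (h : ∀ p, k ∣ n.factorization p) : ∃ c, n = c ^ k := by
  refine ⟨n.factorization.prod fun p e => p ^ (e / k), ?_⟩
  rw [Finsupp.prod, ← Finset.prod_pow]
  conv_lhs => rw [← Nat.factorization_prod_pow_eq_self hn]
  rw [Finsupp.prod]
  refine Finset.prod_congr rfl fun p hp => ?_
  rw [← pow_mul, Nat.div_mul_cancel (h p)]

/-- Special case of Catalan: `c ^ k = 2 ^ M + 1` with `k, M ≥ 2` forces `c = 3, k = 2, M = 3`. -/
lemma catalan_pow2 (c k M : ℕ) (hk : 2 ≤ k) (hM : 2 ≤ M) (h : c ^ k = 2 ^ M + 1) :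
    c = 3 ∧ k = 2 ∧ M = 3 := by
  have h4M : 4 ≤ 2 ^ M := by
    calc (4:ℕ) = 2 ^ 2 := by norm_num
    _ ≤ 2 ^ M := Nat.pow_le_pow_right (by norm_num) hM
  have hodd : Odd c := by
    rcases Nat.even_or_odd c with hc | hc
    · exfalso
      have heck : Even (c ^ k) := (Nat.even_pow).2 ⟨hc, by omega⟩
      rw [h] at heck
      have h2 : Even (2 ^ M) := (Nat.even_pow).2 ⟨even_two, by omega⟩
      rcases heck with ⟨a, ha⟩
      rcases h2 with ⟨b, hb⟩
      omega
    · exact hc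
  have hc3 : 3 ≤ c := by
    obtain ⟨t, ht⟩ := hodd
    rcases Nat.eq_zero_or_pos t with rfl | ht0
    · exfalso
      rw [ht] at h
      simp at h
    · omega
  -- k is even
  have hkeven : Even k := by
    by_contra hko
    rw [Nat.not_even_iff_odd] at hko
    set S : ℕ := ∑ i ∈ Finset.range k, c ^ i with hS
    have hgeom : (S : ℤ) * ((c : ℤ) - 1) = (c : ℤ) ^ k - 1 := by
      rw [hS]
      push_cast
      exact geom_sum_mul (c : ℤ) k
    have hint : (c : ℤ) ^ k - 1 = 2 ^ M := by
      have := congrArg (fun x : ℕ => (x : ℤ)) h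
      push_cast at this
      omega
    have hSdvd : (S : ℤ) ∣ (2 : ℤ) ^ M := ⟨(c : ℤ) - 1, by rw [← hint, hgeom]⟩
    have hSdvdN : S ∣ 2 ^ M := by exact_mod_cast hSdvd
    obtain ⟨m, hm, hSm⟩ := (Nat.dvd_prime_pow Nat.prime_two).1 hSdvdN
    -- S is odd: sum of k odd terms, k odd
    have hSodd : Odd S := by
      rw [hS, Nat.odd_iff]
      have : (∑ i ∈ Finset.range k, c ^ i) % 2 = (∑ i ∈ Finset.range k, 1) % 2 := by
        apply Finset.sum_nat_mod _ 2 _ |>.trans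
        rw [Finset.sum_congr rfl fun i _ => ?_, ← Finset.sum_nat_mod]
        rw [Nat.pow_mod, Nat.odd_iff.mp hodd, one_pow]
      rw [this, Finset.sum_const, Finset.card_range, smul_eq_mul, mul_one]
      exact Nat.odd_iff.mp hko
    -- S > 1
    have hSgt : 1 < S := by
      rw [hS]
      have hsub : Finset.range 2 ⊆ Finset.range k := Finset.range_subset_range.2 hk
      calc 1 < c ^ 0 + c ^ 1 := by simp only [pow_zero, pow_one]; omega
      _ = ∑ i ∈ Finset.range 2, c ^ i := by simp [Finset.sum_range_succ]
      _ ≤ ∑ i ∈ Finset.range k, c ^ i := Finset.sum_le_sum_of_subset hsub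
    -- contradiction: S = 2^m odd and > 1
    rcases Nat.eq_zero_or_pos m with rfl | hm0
    · simp at hSm; omega
    · have hSe : Even S := by
        rw [hSm]
        exact (Nat.even_pow).2 ⟨even_two, by omega⟩
      rw [Nat.even_iff] at hSe
      rw [Nat.odd_iff] at hSodd
      omega
  obtain ⟨j, hj⟩ := hkeven
  have hj1 : 1 ≤ j := by omega
  have hx3 : 3 ≤ c ^ j := by
    calc 3 ≤ c := hc3
    _ = c ^ 1 := (pow_one c).symm
    _ ≤ c ^ j := Nat.pow_le_pow_right (by omega) hj1
  obtain ⟨y, hy⟩ : ∃ y, c ^ j = y + 1 := ⟨c ^ j - 1, by omega⟩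
  have hxx2 : (c ^ j) * (c ^ j) = 2 ^ M + 1 := by rw [← pow_add, ← hj, h]
  have hxx : y * (y + 2) = 2 ^ M := by nlinarith [hxx2, hy]
  have hd1 : y ∣ 2 ^ M := ⟨y + 2, hxx.symm⟩
  have hd2 : (y + 2) ∣ 2 ^ M := ⟨y, by rw [← hxx]; ring⟩
  obtain ⟨a, ha, hxa⟩ := (Nat.dvd_prime_pow Nat.prime_two).1 hd1
  obtain ⟨b, hb, hxb⟩ := (Nat.dvd_prime_pow Nat.prime_two).1 hd2
  have hy2 : 2 ≤ y := by omega
  have hb2 : 2 ≤ b := by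
    by_contra hcon
    interval_cases b <;> omega
  have ha1 : a = 1 := by
    have hba : 2 ^ b = 2 ^ a + 2 := by omega
    have h4b : 4 ∣ 2 ^ b := by
      calc (4:ℕ) = 2 ^ 2 := by norm_num
      _ ∣ 2 ^ b := Nat.pow_dvd_pow 2 hb2
    by_contra hcon
    have ha2 : 2 ≤ a := by
      rcases Nat.lt_or_ge a 2 with h' | h'
      · interval_cases a <;> omega
      · exact h'
    have h4a : 4 ∣ 2 ^ a := by
      calc (4:ℕ) = 2 ^ 2 := by norm_num
      _ ∣ 2 ^ a := Nat.pow_dvd_pow 2 ha2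
    omega
  have hyv : y = 2 := by rw [ha1, pow_one] at hxa; exact hxa
  have hcj : c ^ j = 3 := by omega
  have hj1' : j = 1 := by
    by_contra hcon
    have hj2 : 2 ≤ j := by omega
    have : c ^ 2 ≤ c ^ j := Nat.pow_le_pow_right (by omega) hj2
    nlinarith
  have hcc : c = 3 := by rw [hj1', pow_one] at hcj; exact hcj
  have hM3 : M = 3 := by
    have h8 : 2 ^ M = 2 ^ 3 := by rw [hyv] at hxx; norm_num at hxx ⊢; omega
    exact Nat.pow_right_injective (by norm_num) h8
  exact ⟨hcc, by omega, hM3⟩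

theorem stmt10 (q s M N : ℕ) (hq : 0 < q) (hs : 0 < s) (hN : 0 < N) (hMN : M > N)
    (h : (2 ^ M + 1) ^ q = (2 ^ N + 1) ^ s) :
    M = 3 ∧ N = 1 ∧ s = 2 * q := by
  obtain ⟨A, hA⟩ : ∃ A, A = 2 ^ M + 1 := ⟨_, rfl⟩
  obtain ⟨B, hB⟩ : ∃ B, B = 2 ^ N + 1 := ⟨_, rfl⟩
  rw [← hA, ← hB] at h
  set g : ℕ := Nat.gcd q s with hg
  have hg0 : 0 < g := Nat.gcd_pos_of_pos_left s hq
  set q' : ℕ := q / g with hq'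
  set s' : ℕ := s / g with hs'
  have hqg : q = g * q' := (Nat.mul_div_cancel' (Nat.gcd_dvd_left q s)).symm
  have hsg : s = g * s' := (Nat.mul_div_cancel' (Nat.gcd_dvd_right q s)).symm
  have hq'0 : 0 < q' :=
    Nat.div_pos (Nat.le_of_dvd hq (Nat.gcd_dvd_left q s)) hg0
  have hs'0 : 0 < s' :=
    Nat.div_pos (Nat.le_of_dvd hs (Nat.gcd_dvd_right q s)) hg0
  have hcop : Nat.Coprime q' s' := Nat.coprime_div_gcd_div_gcd hg0
  have hAB : A ^ q' = B ^ s' := by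
    apply Nat.pow_left_injective (by omega : g ≠ 0)
    simp only
    rw [← pow_mul, ← pow_mul, mul_comm q' g, mul_comm s' g, ← hqg, ← hsg, h]
  have hpow : 2 ^ N < 2 ^ M := Nat.pow_lt_pow_right (by norm_num) hMN
  have h1N : 1 ≤ 2 ^ N := Nat.one_le_two_pow
  have hAgtB : B < A := by omega
  have hB2 : 2 ≤ B := by omega
  have hA0 : A ≠ 0 := by omega
  have hs'2 : 2 ≤ s' := by
    by_contra hcon
    have hs'1 : s' = 1 := by omega
    rw [hs'1, pow_one] at hAB
    have : A ≤ A ^ q' := Nat.le_self_pow (by omega) A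
    omega
  -- factorization argument: A is an s'-th power
  have hfac : ∀ p : ℕ, s' ∣ A.factorization p := by
    intro p
    have hfp := congrArg (fun n : ℕ => n.factorization p) hAB
    simp only [Nat.factorization_pow, Finsupp.smul_apply, smul_eq_mul] at hfp
    have hdvd : s' ∣ q' * A.factorization p := ⟨B.factorization p, by omega⟩
    exact (Nat.Coprime.dvd_of_dvd_mul_left (hcop.symm) hdvd)
  obtain ⟨c, hc⟩ := nth_pow_of_dvd_factorization A s' hA0 hfac
  have hBc : B = c ^ q' := by
    apply Nat.pow_left_injective (by omega : s' ≠ 0)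
    simp only
    rw [← hAB, hc, ← pow_mul, ← pow_mul, mul_comm q' s']
  have hM2 : 2 ≤ M := by omega
  obtain ⟨hc3, hs'2', hM3⟩ := catalan_pow2 c s' M hs'2 hM2 (by rw [← hc, hA])
  subst hc3
  have hN12 : N = 1 ∨ N = 2 := by omega
  have hq'N : q' = 1 ∧ N = 1 := by
    rcases hN12 with rfl | rfl
    · refine ⟨?_, rfl⟩
      have h3 : (3:ℕ) ^ q' = 3 ^ 1 := by rw [← hBc, hB]; norm_num
      exact Nat.pow_right_injective (by norm_num) h3
    · exfalso
      have h5 : (3:ℕ) ^ q' = 5 := by rw [← hBc, hB]; norm_num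
      rcases Nat.lt_or_ge q' 2 with h' | h'
      · interval_cases q' <;> omega
      · have : (3:ℕ) ^ 2 ≤ 3 ^ q' := Nat.pow_le_pow_right (by norm_num) h'
        omega
  have hqq : q = g := by rw [hqg, hq'N.1, mul_one]
  have hss : s = g * 2 := by rw [hsg, hs'2']
  exact ⟨hM3, hq'N.2, by omega⟩
end

section
/- If positive integers q, r, M, N satisfy (2^M + 1)^q = (2^N - 1)^r, then either (M, N) = (3, 2) and r = 2q, or (M, N) = (1, 2) and q = r. -/
lemma pow3mod8 (t : ℕ) : 3 ^ t % 8 = 1 ∨ 3 ^ t % 8 = 3 := by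
  obtain ⟨m, hm | hm⟩ := Nat.even_or_odd' t <;> subst hm <;> [left; right] <;>
    simp [pow_add, pow_mul, Nat.pow_mod, Nat.mul_mod]

lemma pow3mod4 (t : ℕ) : 3 ^ t % 4 = if t % 2 = 0 then 1 else 3 := by
  obtain ⟨m, hm | hm⟩ := Nat.even_or_odd' t <;> subst hm <;>
    simp [pow_add, pow_mul, Nat.pow_mod, Nat.mul_mod, Nat.mul_add_mod]

lemma lemA (N t : ℕ) (hN : 2 ≤ N) (h : 2 ^ N - 1 = 3 ^ t) : N = 2 ∧ t = 1 := by
  have h1 : 1 ≤ 2 ^ N := Nat.one_le_two_pow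
  by_cases hN3 : 3 ≤ N
  · exfalso
    have hd : (8 : ℕ) ∣ 2 ^ N := by
      calc (8:ℕ) = 2 ^ 3 := rfl
      _ ∣ 2 ^ N := pow_dvd_pow 2 hN3
    have := pow3mod8 t
    omega
  · have hN2 : N = 2 := by omega
    subst hN2
    have ht : 3 ^ t = 3 ^ 1 := by norm_num at h ⊢; omega
    exact ⟨rfl, Nat.pow_right_injective (by norm_num) ht⟩

lemma aux11 : ∀ q r M N : ℕ, 0 < q → 0 < r → 0 < M → 0 < N →
    (2 ^ M + 1) ^ q = (2 ^ N - 1) ^ r →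
    (M = 3 ∧ N = 2 ∧ r = 2 * q) ∨ (M = 1 ∧ N = 2 ∧ q = r) := by
  intro q
  induction q using Nat.strong_induction_on with
  | _ q IH =>
  intro r M N hq hr hM hN h
  have hx2 : 2 ≤ 2 ^ M := by
    calc (2:ℕ) = 2 ^ 1 := rfl
    _ ≤ 2 ^ M := Nat.pow_le_pow_right (by norm_num) hM
  by_cases hN1 : N = 1
  · subst hN1
    norm_num at h
    have := Nat.le_self_pow hq.ne' (2 ^ M + 1)
    omega
  have hN2 : 2 ≤ N := by omega
  have h4N : (4:ℕ) ∣ 2 ^ N := by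
    calc (4:ℕ) = 2 ^ 2 := rfl
    _ ∣ 2 ^ N := pow_dvd_pow 2 hN2
  have h1N : 1 ≤ 2 ^ N := Nat.one_le_two_pow
  by_cases hM1 : M = 1
  · subst hM1
    norm_num at h
    have hdvd : (2 ^ N - 1) ∣ 3 ^ q := by
      rw [h]; exact dvd_pow_self _ hr.ne'
    obtain ⟨t, _, hyt⟩ := (Nat.dvd_prime_pow Nat.prime_three).mp hdvd
    obtain ⟨hNeq, hteq⟩ := lemA N t hN2 hyt
    subst hteq
    rw [hyt] at h
    right
    refine ⟨rfl, hNeq, ?_⟩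
    have h3 : (3:ℕ) ^ q = 3 ^ r := by rw [h]; ring
    exact Nat.pow_right_injective (by norm_num) h3
  have hM2 : 2 ≤ M := by omega
  have h4M : (4:ℕ) ∣ 2 ^ M := by
    calc (4:ℕ) = 2 ^ 2 := rfl
    _ ∣ 2 ^ M := pow_dvd_pow 2 hM2
  -- r is even
  have hxmod : (2 ^ M + 1) % 4 = 1 := by omega
  have hl : (2 ^ M + 1) ^ q % 4 = 1 := by rw [Nat.pow_mod, hxmod]; simp
  have hymod : (2 ^ N - 1) % 4 = 3 := by omega
  have hrr : (2 ^ N - 1) ^ r % 4 = if r % 2 = 0 then 1 else 3 := by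
    rw [Nat.pow_mod, hymod]; exact pow3mod4 r
  have hreven : r % 2 = 0 := by
    rw [h] at hl
    by_contra hc
    simp [hc] at hrr
    omega
  obtain ⟨s, hs⟩ : ∃ s, r = 2 * s := ⟨r / 2, by omega⟩
  have hs0 : 0 < s := by omega
  by_cases hqe : q % 2 = 0
  · -- q even: descend
    obtain ⟨u, hu⟩ : ∃ u, q = 2 * u := ⟨q / 2, by omega⟩
    have hu0 : 0 < u := by omega
    have h' : ((2 ^ M + 1) ^ u) ^ 2 = ((2 ^ N - 1) ^ s) ^ 2 := by
      rw [← pow_mul, ← pow_mul, mul_comm u 2, mul_comm s 2, ← hu, ← hs, h]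
    have h'' : (2 ^ M + 1) ^ u = (2 ^ N - 1) ^ s :=
      Nat.pow_left_injective (by norm_num) h'
    rcases IH u (by omega) s M N hu0 hs0 hM hN h'' with ⟨h3, h2, hrs⟩ | ⟨h1', _, _⟩
    · left; exact ⟨h3, h2, by omega⟩
    · omega
  · -- q odd: 2^M + 1 is a perfect square
    obtain ⟨m, hm⟩ : ∃ m, q = 2 * m + 1 := ⟨q / 2, by omega⟩
    have hb : (2 ^ M + 1) ^ q = ((2 ^ N - 1) ^ s) ^ 2 := by
      rw [h, hs, mul_comm, pow_mul]
    have hdvd : (2 ^ M + 1) ^ m ∣ (2 ^ N - 1) ^ s := by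
      have h2 : ((2 ^ M + 1) ^ m) ^ 2 ∣ ((2 ^ N - 1) ^ s) ^ 2 := by
        rw [← hb, hm]
        exact ⟨2 ^ M + 1, by ring⟩
      exact (Nat.pow_dvd_pow_iff two_ne_zero).mp h2
    obtain ⟨c, hc⟩ := hdvd
    have hxc : 2 ^ M + 1 = c ^ 2 := by
      have key : (2 ^ M + 1) ^ (2 * m) * (2 ^ M + 1)
          = (2 ^ M + 1) ^ (2 * m) * c ^ 2 := by
        have h1 : (2 ^ M + 1) ^ (2 * m) * (2 ^ M + 1) = (2 ^ M + 1) ^ q := by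
          rw [hm, pow_succ]
        rw [h1, hb, hc]; ring
      exact Nat.eq_of_mul_eq_mul_left (by positivity) key
    have h2M4 : 4 ≤ 2 ^ M := Nat.le_of_dvd (by positivity) h4M
    have hc3 : 3 ≤ c := by
      by_contra hcc
      push_neg at hcc
      have : c ^ 2 ≤ 4 := by nlinarith
      omega
    obtain ⟨a, ha⟩ : ∃ a, c = a + 1 := ⟨c - 1, by omega⟩
    subst ha
    have hca : (a + 1) ^ 2 = 2 ^ M + 1 := hxc.symm
    have hfac : a * (a + 2) = 2 ^ M := by
      have h1 : a * (a + 2) + 1 = (a + 1) ^ 2 := by ring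
      rw [hca] at h1
      exact Nat.add_right_cancel h1
    have hda : a ∣ 2 ^ M := ⟨a + 2, hfac.symm⟩
    have hdb : (a + 2) ∣ 2 ^ M := ⟨a, by rw [← hfac]; ring⟩
    obtain ⟨i, _, hia⟩ := (Nat.dvd_prime_pow Nat.prime_two).mp hda
    obtain ⟨j, _, hja⟩ := (Nat.dvd_prime_pow Nat.prime_two).mp hdb
    have ha2 : 2 ≤ a := by omega
    have hij : 2 ^ j = 2 ^ i + 2 := by omega
    have hi1 : i = 1 := by
      by_contra hne
      have hi2 : 2 ≤ i := by
        rcases Nat.lt_or_ge i 2 with h' | h'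
        · interval_cases i <;> simp_all <;> omega
        · exact h'
      have h4i : (4:ℕ) ∣ 2 ^ i := by
        calc (4:ℕ) = 2 ^ 2 := rfl
        _ ∣ 2 ^ i := pow_dvd_pow 2 hi2
      have h2i4 : 4 ≤ 2 ^ i := Nat.le_of_dvd (by positivity) h4i
      have hj2 : 2 ≤ j := by
        by_contra hjc
        push_neg at hjc
        interval_cases j <;> omega
      have h4j : (4:ℕ) ∣ 2 ^ j := by
        calc (4:ℕ) = 2 ^ 2 := rfl
        _ ∣ 2 ^ j := pow_dvd_pow 2 hj2
      omega
    have haa : a = 2 := by rw [hi1] at hia; omega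
    subst haa
    have hM3 : M = 3 := by
      have : (2:ℕ) ^ M = 2 ^ 3 := by omega
      exact Nat.pow_right_injective (le_refl 2) this
    subst hM3
    left
    have h9 : (3:ℕ) ^ (2 * q) = (2 ^ N - 1) ^ r := by
      rw [pow_mul]
      norm_num at h ⊢
      exact h
    have hdvd2 : (2 ^ N - 1) ∣ 3 ^ (2 * q) := by
      rw [h9]; exact dvd_pow_self _ hr.ne'
    obtain ⟨t, _, hyt⟩ := (Nat.dvd_prime_pow Nat.prime_three).mp hdvd2
    obtain ⟨hNeq, hteq⟩ := lemA N t hN2 hyt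
    subst hteq
    rw [hyt] at h9
    have h3 : (3:ℕ) ^ (2 * q) = 3 ^ r := by rw [h9]; ring
    have := Nat.pow_right_injective (by norm_num) h3
    exact ⟨rfl, hNeq, by omega⟩

theorem stmt11 (q r M N : ℕ) (hq : 0 < q) (hr : 0 < r) (hM : 0 < M) (hN : 0 < N)
    (h : (2 ^ M + 1) ^ q = (2 ^ N - 1) ^ r) :
    (M = 3 ∧ N = 2 ∧ r = 2 * q) ∨ (M = 1 ∧ N = 2 ∧ q = r) := by
  exact aux11 q r M N hq hr hM hN h
end

section
/- For positive integers p, q, r, s and distinct positive integers M, N, we have (2^M - 1)^p (2^M + 1)^q ≠ (2^N - 1)^r (2^N + 1)^s. -/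
/-! The prime factors of `(2^M - 1)^p (2^M + 1)^q` are those of `2^(2M) - 1`, so it suffices that
the prime factors of `2^n - 1` are not all among those of `2^m - 1` when `0 < m < n`. If they were,
they would all divide `2^g - 1` for `g = gcd m n`, and lifting the exponent at these odd primes
would give `2^n - 1 ∣ (2^g - 1) * (n / g)`, which is impossible for size reasons as `n / g ≥ 2`. -/

namespace Nat

theorem primeFactors_pow_mul_pow {a b p q : ℕ} (ha : a ≠ 0) (hb : b ≠ 0) (hp : p ≠ 0)
    (hq : q ≠ 0) : (a ^ p * b ^ q).primeFactors = (a * b).primeFactors := by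
  rw [primeFactors_mul (pow_ne_zero p ha) (pow_ne_zero q hb), primeFactors_mul ha hb,
    primeFactors_pow a hp, primeFactors_pow b hq]

theorem pow_sub_one_mul_pow_add_one (a n : ℕ) : (a ^ n - 1) * (a ^ n + 1) = a ^ (2 * n) - 1 := by
  rw [mul_comm, ← one_pow 2, ← Nat.sq_sub_sq, one_pow, one_pow, ← pow_mul, mul_comm]

theorem sub_one_mul_lt_pow_sub_one {x t : ℕ} (hx : 2 ≤ x) (ht : 2 ≤ t) :
    (x - 1) * t < x ^ t - 1 := by
  induction t, ht using Nat.le_induction with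
  | base =>
    zify [(by omega : 1 ≤ x), (by nlinarith : 1 ≤ x ^ 2)]
    nlinarith
  | succ t ht ih =>
    have hxt : x ≤ x ^ t := Nat.le_self_pow (by omega) x
    rw [pow_succ]
    zify [(by omega : 1 ≤ x), (by omega : 1 ≤ x ^ t), (by nlinarith : 1 ≤ x ^ t * x)] at ih ⊢
    nlinarith

theorem pow_sub_one_dvd_sub_one_mul_of_primeFactors_subset {x t : ℕ} (hx : Even x) (hx1 : 1 < x)
    (ht : t ≠ 0) (h : (x ^ t - 1).primeFactors ⊆ (x - 1).primeFactors) :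
    x ^ t - 1 ∣ (x - 1) * t := by
  have hxt : 1 < x ^ t := Nat.one_lt_pow ht hx1
  refine (factorization_prime_le_iff_dvd (by omega) (mul_ne_zero (by omega) ht)).mp
    fun ℓ hℓ => ?_
  by_cases hℓxt : ℓ ∣ x ^ t - 1
  · have hℓx1 : ℓ ∣ x - 1 :=
      dvd_of_mem_primeFactors (h (mem_primeFactors.mpr ⟨hℓ, hℓxt, by omega⟩))
    have hℓx : ¬ ℓ ∣ x := fun hℓx => hℓ.one_lt.ne' <| Nat.dvd_one.mp <| by
      simpa [Nat.sub_sub_self hx1.le] using Nat.dvd_sub hℓx hℓx1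
    have hℓ_odd : Odd ℓ := hℓ.odd_of_ne_two <| by
      rintro rfl
      exact hℓx (even_iff_two_dvd.mp hx)
    have := Fact.mk hℓ
    have lte := padicValNat.pow_sub_pow hℓ_odd hx1 (by simpa using hℓx1) hℓx ht
    rw [one_pow] at lte
    rw [factorization_def _ hℓ, factorization_def _ hℓ, lte, padicValNat.mul (by omega) ht]
  · rw [factorization_eq_zero_of_not_dvd hℓxt]
    exact Nat.zero_le _

theorem le_of_primeFactors_pow_sub_one_subset {a m n : ℕ} (ha : Even a) (ha1 : 1 < a) (hm : 0 < m)
    (h : (a ^ n - 1).primeFactors ⊆ (a ^ m - 1).primeFactors) : n ≤ m := by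
  by_contra! hmn
  set g := m.gcd n
  have hg : 0 < g := Nat.gcd_pos_of_pos_left n hm
  have hgn : g * (n / g) = n := Nat.mul_div_cancel' (Nat.gcd_dvd_right m n)
  have ht : 2 ≤ n / g := by
    have : g ≤ m := Nat.le_of_dvd hm (Nat.gcd_dvd_left m n)
    by_contra!
    interval_cases n / g <;> omega
  have hx1 : 1 < a ^ g := Nat.one_lt_pow hg.ne' ha1
  have hsub : ((a ^ g) ^ (n / g) - 1).primeFactors ⊆ (a ^ g - 1).primeFactors := by
    rw [← pow_mul, hgn]
    intro ℓ hℓ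
    have hℓm := dvd_of_mem_primeFactors (h hℓ)
    have hℓn := dvd_of_mem_primeFactors hℓ
    exact mem_primeFactors.mpr ⟨prime_of_mem_primeFactors hℓ,
      pow_sub_one_gcd_pow_sub_one a m n ▸ Nat.dvd_gcd hℓm hℓn, by omega⟩
  have hdvd := pow_sub_one_dvd_sub_one_mul_of_primeFactors_subset (ha.pow_of_ne_zero hg.ne') hx1
    (by omega) hsub
  have hle := Nat.le_of_dvd (Nat.mul_pos (by omega) (by omega)) hdvd
  have hlt := sub_one_mul_lt_pow_sub_one hx1 ht
  omega

end Nat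

theorem stmt12 (p q r s M N : ℕ) (hp : 0 < p) (hq : 0 < q) (hr : 0 < r) (hs : 0 < s)
    (hM : 0 < M) (hN : 0 < N) (hMN : M ≠ N) :
    (2 ^ M - 1) ^ p * (2 ^ M + 1) ^ q ≠ (2 ^ N - 1) ^ r * (2 ^ N + 1) ^ s := by
  intro h
  have hM1 : 2 ^ M - 1 ≠ 0 := by have := Nat.one_lt_two_pow hM.ne'; omega
  have hN1 : 2 ^ N - 1 ≠ 0 := by have := Nat.one_lt_two_pow hN.ne'; omega
  have hprimes := congrArg Nat.primeFactors h
  rw [Nat.primeFactors_pow_mul_pow hM1 (by positivity) hp.ne' hq.ne',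
    Nat.primeFactors_pow_mul_pow hN1 (by positivity) hr.ne' hs.ne',
    Nat.pow_sub_one_mul_pow_add_one, Nat.pow_sub_one_mul_pow_add_one] at hprimes
  have hNM := Nat.le_of_primeFactors_pow_sub_one_subset even_two one_lt_two (by omega) hprimes.ge
  have hMN' := Nat.le_of_primeFactors_pow_sub_one_subset even_two one_lt_two (by omega) hprimes.le
  omega
end

section
/- Suppose for each i = 1,...,N we have positive integers m_i, integers l_i, and integers p_i with 0 ≤ p_i ≤ m_i, such that for every i, each of |g_i(2)| and |h_i(2)| is a power of 2, where g_i(t) = t^{p_i + l_i} + (-1)^{m_i - (p_i+1)} (t-1)^{m_i} and h_i(t) = t^{m_i - (p_i + l_i)} + (-1)^{p_i + 1} (t-1)^{m_i}. Then for each i, either g_i(t) h_i(t) = t or g_i(t) h_i(t) = 1 - 6t + 11t^2 - 6t^3 + t^4 (as Laurent polynomials). -/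
open LaurentPolynomial

lemma lemA_s15 (a s : ℤ) (h : |(2:ℚ)^a + 1| = (2:ℚ)^s) : a = 0 := by
  have h2 : (0:ℚ) < 2^a := by positivity
  rw [abs_of_pos (by linarith)] at h
  by_contra hne
  rcases lt_or_gt_of_ne hne with hlt | hgt
  · have h1 : (2:ℚ)^a < 1 := by
      have := zpow_lt_zpow_right₀ (by norm_num : (1:ℚ) < 2) (show a < 0 from hlt)
      simpa using this
    have hs1 : (2:ℚ)^(0:ℤ) < 2^s := by rw [← h]; simp; linarith
    have hs2 : (2:ℚ)^s < 2^(1:ℤ) := by rw [← h]; simp [zpow_one]; linarith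
    rw [zpow_lt_zpow_iff_right₀ (by norm_num : (1:ℚ) < 2)] at hs1 hs2
    omega
  · have h1 : (1:ℚ) < 2^a := by
      have := zpow_lt_zpow_right₀ (by norm_num : (1:ℚ) < 2) (show (0:ℤ) < a from hgt)
      simpa using this
    have hs1 : (2:ℚ)^a < 2^s := by rw [← h]; linarith
    have hs2 : (2:ℚ)^s < 2^(a+1) := by
      rw [← h, zpow_add_one₀ (by norm_num : (2:ℚ) ≠ 0)]; linarith
    rw [zpow_lt_zpow_iff_right₀ (by norm_num : (1:ℚ) < 2)] at hs1 hs2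
    omega

lemma lemB (a s : ℤ) (h : |(2:ℚ)^a - 1| = (2:ℚ)^s) : a = 1 ∨ a = -1 := by
  by_contra hne
  push_neg at hne
  obtain ⟨h1, h2⟩ := hne
  rcases lt_trichotomy a 0 with hlt | rfl | hgt
  · have ha2 : a ≤ -2 := by omega
    have hle : (2:ℚ)^a ≤ 2^(-2:ℤ) :=
      zpow_le_zpow_right₀ (by norm_num : (1:ℚ) ≤ 2) ha2
    have hpos : (0:ℚ) < 2^a := by positivity
    rw [abs_of_neg (by norm_num at hle ⊢; linarith)] at h
    have hs1 : (2:ℚ)^(-1:ℤ) < 2^s := by rw [← h]; norm_num at hle ⊢; linarith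
    have hs2 : (2:ℚ)^s < 2^(0:ℤ) := by rw [← h]; norm_num; linarith
    rw [zpow_lt_zpow_iff_right₀ (by norm_num : (1:ℚ) < 2)] at hs1 hs2
    omega
  · simp at h
    exact absurd h.symm (ne_of_gt (by positivity))
  · have ha2 : (2:ℤ) ≤ a := by omega
    have hge : (2:ℚ)^(2:ℤ) ≤ 2^a :=
      zpow_le_zpow_right₀ (by norm_num : (1:ℚ) ≤ 2) ha2
    norm_num at hge
    have hgem : (2:ℚ)^(a-1) * 2 = 2^a := by
      rw [← zpow_add_one₀ (by norm_num : (2:ℚ) ≠ 0)]; ring_nf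
    have hgem2 : (2:ℚ)^(a-1) ≥ 2 := by
      have : (2:ℚ)^((2:ℤ)-1) ≤ 2^(a-1) :=
        zpow_le_zpow_right₀ (by norm_num : (1:ℚ) ≤ 2) (by omega)
      norm_num at this; linarith
    rw [abs_of_pos (by linarith)] at h
    have hs1 : (2:ℚ)^(a-1) < 2^s := by rw [← h]; linarith
    have hs2 : (2:ℚ)^s < 2^a := by rw [← h]; linarith
    rw [zpow_lt_zpow_iff_right₀ (by norm_num : (1:ℚ) < 2)] at hs1 hs2
    omega


lemma lemC {G : Type*} [Group G] [HasDistribNeg G] {n : ℤ} (h : Odd n) : (-1:G)^n = -1 := by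
  obtain ⟨k, rfl⟩ := h
  rw [zpow_add, zpow_mul, zpow_one, zpow_two, neg_mul_neg, one_mul, one_zpow, one_mul]

theorem stmt15 (N : ℕ) (hN : 0 < N)
    (m p : Fin N → ℕ) (l : Fin N → ℤ)
    (hm : ∀ i, 0 < m i) (hp : ∀ i, p i ≤ m i)
    (g h : Fin N → LaurentPolynomial ℤ)
    (hg : ∀ i, g i = T ((p i : ℤ) + l i) +
      C ((((-1 : ℤˣ) ^ ((m i : ℤ) - ((p i : ℤ) + 1)) : ℤˣ) : ℤ)) * (T 1 - 1) ^ (m i))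
    (hh : ∀ i, h i = T ((m i : ℤ) - ((p i : ℤ) + l i)) +
      C ((((-1 : ℤˣ) ^ ((p i : ℤ) + 1) : ℤˣ) : ℤ)) * (T 1 - 1) ^ (m i))
    (hg2 : ∀ i, ∃ s : ℤ,
      |(2 : ℚ) ^ ((p i : ℤ) + l i) + (-1 : ℚ) ^ ((m i : ℤ) - ((p i : ℤ) + 1))| = (2 : ℚ) ^ s)
    (hh2 : ∀ i, ∃ s : ℤ,
      |(2 : ℚ) ^ ((m i : ℤ) - ((p i : ℤ) + l i)) + (-1 : ℚ) ^ ((p i : ℤ) + 1)| = (2 : ℚ) ^ s) :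
    ∀ i, g i * h i = T 1 ∨
      g i * h i = 1 - C 6 * T 1 + C 11 * T 2 - C 6 * T 3 + T 4 := by
  intro i
  obtain ⟨s, hs⟩ := hg2 i
  obtain ⟨t, ht⟩ := hh2 i
  have hmi := hm i
  rcases Int.even_or_odd ((m i:ℤ) - ((p i:ℤ)+1)) with hB | hB <;>
    rcases Int.even_or_odd ((p i:ℤ)+1) with hD | hD
  · -- Even, Even : contradiction
    rw [hB.neg_one_zpow] at hs
    rw [hD.neg_one_zpow] at ht
    have h1 := lemA_s15 _ _ hs
    have h2 := lemA_s15 _ _ ht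
    exfalso; omega
  · -- Even B, Odd D : g*h = T 1
    rw [hB.neg_one_zpow] at hs
    rw [hD.neg_one_zpow, ← sub_eq_add_neg] at ht
    have h1 := lemA_s15 _ _ hs
    have h2 := lemB _ _ ht
    have hm1 : m i = 1 := by omega
    have e2 : (m i:ℤ) - ((p i:ℤ) + l i) = 1 := by omega
    left
    rw [hg i, hh i, hB.neg_one_zpow, lemC hD, e2, h1, hm1]
    simp only [Units.val_one, Units.val_neg, map_one, map_neg, T_zero, pow_one]
    ring
  · -- Odd B, Even D : g*h = T 1
    rw [hB.neg_one_zpow, ← sub_eq_add_neg] at hs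
    rw [hD.neg_one_zpow] at ht
    have h1 := lemB _ _ hs
    have h2 := lemA_s15 _ _ ht
    have hm1 : m i = 1 := by omega
    have e1 : (p i:ℤ) + l i = 1 := by omega
    left
    rw [hg i, hh i, lemC hB, hD.neg_one_zpow, h2, e1, hm1]
    simp only [Units.val_one, Units.val_neg, map_one, map_neg, T_zero, pow_one]
    ring
  · -- Odd, Odd : quartic
    rw [hB.neg_one_zpow, ← sub_eq_add_neg] at hs
    rw [hD.neg_one_zpow, ← sub_eq_add_neg] at ht
    have h1 := lemB _ _ hs
    have h2 := lemB _ _ ht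
    have hm2 : m i = 2 := by omega
    have e1 : (p i:ℤ) + l i = 1 := by omega
    have e2 : (m i:ℤ) - ((p i:ℤ) + l i) = 1 := by omega
    right
    have hT2 : (T 2 : LaurentPolynomial ℤ) = T 1 * T 1 := by rw [← T_add]; norm_num
    have hT3 : (T 3 : LaurentPolynomial ℤ) = T 2 * T 1 := by rw [← T_add]; norm_num
    have hT4 : (T 4 : LaurentPolynomial ℤ) = T 2 * T 2 := by rw [← T_add]; norm_num
    rw [hg i, hh i, lemC hB, lemC hD, e2, e1, hm2, hT3, hT4, hT2]
    simp only [Units.val_neg, Units.val_one, map_neg, map_one, map_ofNat]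
    ring
end

section
/- The integer 6 - 13·2 + 6·4 = 4, the largest odd factor of which is 1, and 6 - 13t + 6t^2 is not equal to 1 nor to any power (1 - 6t + 11t^2 - 6t^3 + t^4)^n; hence the polynomial 6 - 13t + 6t^2 cannot be written (up to units ± t^k) as a product Π_{i=1}^N {(1-t)^{m_i} - t^{l_i}(-t)^{p_i}} · {(1-t)^{m_i} - t^{-l_i}(-t)^{m_i - p_i}} with m_i ≥ 1, 0 ≤ p_i ≤ m_i, l_i ∈ Z. -/
/-!
`t = 2/3` is a root of `6 - 13t + 6t² = (2 - 3t)(3 - 2t)`. At `t = 2/3` each factor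
`(1 - t)^m - t^l (-t)^p` takes the value `(1/3)^m ∓ (2/3)^(l + p)`, which never vanishes for
`m ≥ 1`: `(2/3)^J` is at least `1` for `J ≤ 0` and has even numerator for `J > 0`.
The same evaluation separates `6 - 13t + 6t²` from `1` and from every power of
`1 - 6t + 11t² - 6t³ + t⁴ = (1 - 3t + t²)²`, which takes the value `(-5/9)²` there.
-/

open LaurentPolynomial

theorem one_third_pow_ne_two_thirds_zpow {m : ℕ} (hm : m ≠ 0) (J : ℤ) :
    (1 / 3 : ℚ) ^ m ≠ (2 / 3) ^ J := by
  have hlt : (1 / 3 : ℚ) ^ m < 1 := pow_lt_one₀ (by norm_num) (by norm_num) hm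
  obtain hJ | ⟨n, rfl⟩ : J ≤ 0 ∨ ∃ n : ℕ, J = n + 1 := by
    rcases le_or_gt J 0 with h | h
    · exact .inl h
    · exact .inr ⟨(J - 1).toNat, by omega⟩
  · exact (hlt.trans_le (one_le_zpow_of_nonpos₀ (by norm_num) (by norm_num) hJ)).ne
  · intro h
    have hnat : 3 ^ (n + 1) = 2 ^ (n + 1) * 3 ^ m := by
      rw [← Nat.cast_add_one, zpow_natCast, div_pow, div_pow, one_pow,
        div_eq_div_iff (by positivity) (by positivity), one_mul] at h
      exact_mod_cast h
    have h2 : 2 ∣ 3 ^ (n + 1) := hnat ▸ (dvd_pow_self 2 n.succ_ne_zero).mul_right _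
    exact absurd (Nat.prime_two.dvd_of_dvd_pow h2) (by decide)

theorem one_sub_two_thirds_pow_sub_ne_zero {m : ℕ} (hm : m ≠ 0) (j : ℤ) (p : ℕ) :
    (1 - 2 / 3 : ℚ) ^ m - (2 / 3) ^ j * (-(2 / 3)) ^ p ≠ 0 := by
  rw [sub_ne_zero]
  intro h
  have habs := congrArg abs h
  rw [abs_mul, abs_pow, abs_zpow, abs_pow, abs_neg] at habs
  norm_num at habs
  exact one_third_pow_ne_two_thirds_zpow hm (j + p)
    (by rwa [zpow_add₀ (by norm_num), zpow_natCast])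

noncomputable abbrev evalTwoThirds : LaurentPolynomial ℤ →+* ℚ :=
  eval₂ (Int.castRingHom ℚ) (Units.mk0 (2 / 3) (by norm_num))

theorem evalTwoThirds_T (n : ℤ) : evalTwoThirds (T n) = (2 / 3 : ℚ) ^ n := by
  simp

theorem evalTwoThirds_alexander :
    evalTwoThirds (C 6 - C 13 * T 1 + C 6 * T 2) = 0 := by
  simp only [map_add, map_sub, map_mul, eval₂_C, evalTwoThirds_T]
  norm_num

theorem evalTwoThirds_quartic :
    evalTwoThirds (1 - C 6 * T 1 + C 11 * T 2 - C 6 * T 3 + T 4) = (-5 / 9) ^ 2 := by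
  simp only [map_add, map_sub, map_mul, map_one, eval₂_C, evalTwoThirds_T]
  norm_num

theorem evalTwoThirds_factor_ne_zero {m : ℕ} (hm : m ≠ 0) (l : ℤ) (p : ℕ) :
    evalTwoThirds ((1 - T 1) ^ m - T l * (-T 1) ^ p) ≠ 0 := by
  simp only [map_sub, map_mul, map_pow, map_neg, map_one, evalTwoThirds_T, zpow_one]
  exact one_sub_two_thirds_pow_sub_ne_zero hm l p

theorem stmt19 :
    ((6 - 13 * 2 + 6 * 4 : ℤ) = 4) ∧
    (∀ k : ℕ, Odd k → (k : ℤ) ∣ 4 → k = 1) ∧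
    ((C 6 - C 13 * T 1 + C 6 * T 2 : LaurentPolynomial ℤ) ≠ 1) ∧
    (∀ n : ℕ, (C 6 - C 13 * T 1 + C 6 * T 2 : LaurentPolynomial ℤ) ≠
      (1 - C 6 * T 1 + C 11 * T 2 - C 6 * T 3 + T 4) ^ n) ∧
    ¬ ∃ (N : ℕ) (m p : ℕ → ℕ) (l : ℕ → ℤ), 0 < N ∧
      (∀ i < N, 1 ≤ m i ∧ p i ≤ m i) ∧
      ∃ (ε : ℤˣ) (k : ℤ),
        (C 6 - C 13 * T 1 + C 6 * T 2 : LaurentPolynomial ℤ) =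
          C ((ε : ℤ)) * T k *
            ∏ i ∈ Finset.range N,
              (((1 - T 1) ^ (m i) - T (l i) * (-T 1) ^ (p i)) *
                ((1 - T 1) ^ (m i) - T (-(l i)) * (-T 1) ^ (m i - p i))) := by
  refine ⟨by norm_num, fun k hodd hdvd => ?_, fun h => ?_, fun n h => ?_, ?_⟩
  · exact (Nat.coprime_two_right.mpr hodd).pow_right 2 |>.eq_one_of_dvd (by exact_mod_cast hdvd)
  · have h' := congrArg evalTwoThirds h
    rw [evalTwoThirds_alexander, map_one] at h'
    exact zero_ne_one h'
  · have h' := congrArg evalTwoThirds h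
    rw [evalTwoThirds_alexander, map_pow, evalTwoThirds_quartic] at h'
    exact absurd h'.symm (by positivity)
  · rintro ⟨N, m, p, l, -, hmp, ε, k, heq⟩
    have h0 := congrArg evalTwoThirds heq
    rw [evalTwoThirds_alexander, map_mul, map_mul, map_prod, eval₂_C, evalTwoThirds_T] at h0
    refine mul_ne_zero (mul_ne_zero (by simp) (zpow_ne_zero k (by norm_num))) ?_ h0.symm
    refine Finset.prod_ne_zero_iff.mpr fun i hi => ?_
    have hm : m i ≠ 0 := Nat.one_le_iff_ne_zero.mp (hmp i (Finset.mem_range.mp hi)).1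
    rw [map_mul]
    exact mul_ne_zero (evalTwoThirds_factor_ne_zero hm _ _) (evalTwoThirds_factor_ne_zero hm _ _)
end
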